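/- arXiv:0809.1308 — 8 statements merged into one kernel-verified Lean document; each statement's English description precedes it below -/
import Mathlib

section
/- Let S be a real n×m matrix whose SR graph G(S) satisfies Condition (*): every e-cycle of G(S) is an s-cycle, and there do not exist two e-cycles of G(S) with distinct edge sets having S-to-R intersection. Then S is SSD: every square submatrix of S is either sign nonsingular or has determinant zero. -/
/-!
Fix a square submatrix `M`. If no permutation `σ` has all entries `M i (σ i)` nonzero, then
`det M = 0`; otherwise permute its columns so that the diagonal is nonzero. Permutations `α`, `β`
with nonzero entries are perfect matchings of `G(M)`; when `α⁻¹ * β` is a cycle they differ along a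
single SR cycle `C`, and the signs of their determinant terms satisfy `ε(α) ε(β) = -P(C)`. So if
the cycles of nonzero terms, taken against the diagonal, are all o-cycles, then every nonzero term
of every matrix with the sign pattern of `M` has the sign of the diagonal term, and `M` is sign
nonsingular.

Otherwise some cycle `c` of nonzero entries gives an e-cycle. Any other such cycle meeting `c`
can be rerouted into a cycle `f` that follows `c` along one chain and then branches off; then
either `f` or the cycle along which the matchings `c` and `f` differ is an e-cycle meeting the
e-cycle of `c` in a single S-to-R path, which Condition (*) forbids. Hence every nonzero term
agrees with `c` on its support or fixes it pointwise, so multiplying by `c` pairs off the nonzero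
terms; the e-cycle of `c` is an s-cycle, so paired terms cancel and `det M = 0`.
-/

namespace SRGraph

variable {n m : ℕ}

/-- A cycle of the SR graph `G(S)`: `r ≥ 2` together with injective maps
`a : Fin r → Fin n` (S-vertices) and `b : Fin r → Fin m` (R-vertices) such that the
entries `S (a j) (b j)` and `S (a j) (b (j+1))` (indices mod `r`) are all nonzero. -/
def IsCyc (S : Matrix (Fin n) (Fin m) ℝ) {r : ℕ} (a : Fin r → Fin n) (b : Fin r → Fin m) :
    Prop :=
  2 ≤ r ∧ Function.Injective a ∧ Function.Injective b ∧
    (∀ j, S (a j) (b j) ≠ 0) ∧ (∀ j, S (a j) (b (finRotate r j)) ≠ 0)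

/-- The parity `P(C) = (-1)^r ∏_j sign(S (a j) (b j)) · sign(S (a j) (b (j+1)))` of a
cycle; the cycle is an e-cycle if this is `1` and an o-cycle if it is `-1`. -/
noncomputable def parity (S : Matrix (Fin n) (Fin m) ℝ) {r : ℕ}
    (a : Fin r → Fin n) (b : Fin r → Fin m) : ℝ :=
  (-1 : ℝ) ^ r *
    ∏ j : Fin r, Real.sign (S (a j) (b j)) * Real.sign (S (a j) (b (finRotate r j)))

/-- A cycle is an s-cycle when the products of the absolute values of the entries on the
two halves of its disconnecting partition agree. -/
def IsSCyc (S : Matrix (Fin n) (Fin m) ℝ) {r : ℕ} (a : Fin r → Fin n)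
    (b : Fin r → Fin m) : Prop :=
  ∏ j : Fin r, |S (a j) (b j)| = ∏ j : Fin r, |S (a j) (b (finRotate r j))|

/-- The edge set of a cycle: the `2r` pairs `(a j, b j)` and `(a j, b (j+1))`. -/
def cycEdges {r : ℕ} (a : Fin r → Fin n) (b : Fin r → Fin m) : Set (Fin n × Fin m) :=
  {e | ∃ j : Fin r, e = (a j, b j) ∨ e = (a j, b (finRotate r j))}

/-- The vertex set of a cycle inside `Fin n ⊕ Fin m`. -/
def cycVerts {r : ℕ} (a : Fin r → Fin n) (b : Fin r → Fin m) : Set (Fin n ⊕ Fin m) :=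
  Set.range (Sum.inl ∘ a) ∪ Set.range (Sum.inr ∘ b)

/-- Adjacency relation on `Fin n ⊕ Fin m` determined by a set `E` of (S,R) edges. -/
def adjOf (E : Set (Fin n × Fin m)) : (Fin n ⊕ Fin m) → (Fin n ⊕ Fin m) → Prop
  | Sum.inl i, Sum.inr j => (i, j) ∈ E
  | Sum.inr j, Sum.inl i => (i, j) ∈ E
  | _, _ => False

/-- The connected component of `v` in the subgraph with vertex set `V` and edge set `E`. -/
def componentOf (E : Set (Fin n × Fin m)) (V : Set (Fin n ⊕ Fin m))
    (v : Fin n ⊕ Fin m) : Set (Fin n ⊕ Fin m) :=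
  {x ∈ V | Relation.ReflTransGen (adjOf E) v x}

/-- Vertex set of an S-to-R path `u 0 – w 0 – u 1 – ⋯ – u p – w p`. -/
def pathVerts {p : ℕ} (u : Fin (p + 1) → Fin n) (w : Fin (p + 1) → Fin m) :
    Set (Fin n ⊕ Fin m) :=
  Set.range (Sum.inl ∘ u) ∪ Set.range (Sum.inr ∘ w)

/-- Edge set (the `2p+1` pairs `(u i, w i)` and `(u (i+1), w i)`) of an S-to-R path. -/
def pathEdges {p : ℕ} (u : Fin (p + 1) → Fin n) (w : Fin (p + 1) → Fin m) :
    Set (Fin n × Fin m) :=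
  {e | ∃ i : Fin (p + 1), e = (u i, w i)} ∪ {e | ∃ i : Fin p, e = (u i.succ, w i.castSucc)}

/-- The subgraph with (nonempty) vertex set `V` and edge set `E` has all of its connected
components equal to paths joining an S-vertex to an R-vertex. -/
def SRIntersection (V : Set (Fin n ⊕ Fin m)) (E : Set (Fin n × Fin m)) : Prop :=
  V.Nonempty ∧
    ∀ v ∈ V, ∃ (p : ℕ) (u : Fin (p + 1) → Fin n) (w : Fin (p + 1) → Fin m),
      Function.Injective u ∧ Function.Injective w ∧
      pathVerts u w = componentOf E V v ∧
      pathEdges u w = {e ∈ E | Sum.inl e.1 ∈ componentOf E V v}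

/-- `G(S)` contains two e-cycles, with distinct edge sets, having S-to-R intersection. -/
def TwoECyclesWithSRIntersection (S : Matrix (Fin n) (Fin m) ℝ) : Prop :=
  ∃ (r₁ : ℕ) (a₁ : Fin r₁ → Fin n) (b₁ : Fin r₁ → Fin m)
    (r₂ : ℕ) (a₂ : Fin r₂ → Fin n) (b₂ : Fin r₂ → Fin m),
    IsCyc S a₁ b₁ ∧ parity S a₁ b₁ = 1 ∧ IsCyc S a₂ b₂ ∧ parity S a₂ b₂ = 1 ∧
    cycEdges a₁ b₁ ≠ cycEdges a₂ b₂ ∧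
    SRIntersection (cycVerts a₁ b₁ ∩ cycVerts a₂ b₂) (cycEdges a₁ b₁ ∩ cycEdges a₂ b₂)

/-- Condition (*): all e-cycles are s-cycles, and no two e-cycles (with distinct edge
sets) have S-to-R intersection. -/
def ConditionStar (S : Matrix (Fin n) (Fin m) ℝ) : Prop :=
  (∀ (r : ℕ) (a : Fin r → Fin n) (b : Fin r → Fin m),
      IsCyc S a b → parity S a b = 1 → IsSCyc S a b) ∧
  ¬ TwoECyclesWithSRIntersection S

/-- Two real matrices have the same sign pattern. -/
def SameSignPattern {k l : ℕ} (B M : Matrix (Fin k) (Fin l) ℝ) : Prop :=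
  ∀ i j, Real.sign (B i j) = Real.sign (M i j)

/-- A square real matrix is sign nonsingular if every matrix with the same sign pattern
has nonzero determinant. -/
def SignNonsingular {k : ℕ} (M : Matrix (Fin k) (Fin k) ℝ) : Prop :=
  ∀ B : Matrix (Fin k) (Fin k) ℝ, SameSignPattern B M → B.det ≠ 0

/-- A square real matrix is sign singular if every matrix with the same sign pattern has
zero determinant. -/
def SignSingular {k : ℕ} (M : Matrix (Fin k) (Fin k) ℝ) : Prop :=
  ∀ B : Matrix (Fin k) (Fin k) ℝ, SameSignPattern B M → B.det = 0

/-- `S` is strongly sign determined: every square submatrix of `S` is sign nonsingular or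
has determinant zero. -/
def SSD (S : Matrix (Fin n) (Fin m) ℝ) : Prop :=
  ∀ (k : ℕ) (ρ : Fin k → Fin n) (c : Fin k → Fin m),
    Function.Injective ρ → Function.Injective c →
    SignNonsingular (S.submatrix ρ c) ∨ (S.submatrix ρ c).det = 0

end SRGraph

theorem Real.sign_mul_abs (x : ℝ) : Real.sign x * |x| = x := by
  rcases lt_trichotomy x 0 with h | rfl | h
  · rw [Real.sign_of_neg h, abs_of_neg h]; ring
  · simp
  · rw [Real.sign_of_pos h, abs_of_pos h]; ring

theorem Real.sign_mul_self_of_ne_zero {x : ℝ} (hx : x ≠ 0) : Real.sign x * Real.sign x = 1 := by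
  rcases Real.sign_apply_eq_of_ne_zero x hx with h | h <;> rw [h] <;> norm_num

theorem Equiv.Perm.pow_succ_apply {α : Type*} (π : Equiv.Perm α) (a : ℕ) (x : α) :
    (π ^ (a + 1)) x = π ((π ^ a) x) := by
  rw [pow_succ', Equiv.Perm.mul_apply]

theorem Equiv.Perm.IsCycle.isCycleOn_support {α : Type*} [DecidableEq α] [Fintype α]
    {π : Equiv.Perm α} (hπ : π.IsCycle) : π.IsCycleOn (π.support : Set α) := by
  rw [Equiv.Perm.coe_support_eq_set_support]
  exact hπ.isCycleOn

theorem Equiv.Perm.IsCycle.eq_of_pow_apply_eq {α : Type*} [DecidableEq α] [Fintype α]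
    {π : Equiv.Perm α} (hπ : π.IsCycle) {x : α} (hx : x ∈ π.support) {a b : ℕ}
    (ha : a < π.support.card) (hb : b < π.support.card) (h : (π ^ a) x = (π ^ b) x) : a = b :=
  ((hπ.isCycleOn_support.pow_apply_eq_pow_apply hx).mp h).eq_of_lt_of_lt ha hb

theorem Equiv.Perm.IsCycle.exists_first_return {α : Type*} [DecidableEq α] [Fintype α]
    {g : Equiv.Perm α} (hg : g.IsCycle) {x : α} (hxg : x ∈ g.support) {s : Finset α}
    (hxs : x ∈ s) :
    ∃ j, 0 < j ∧ j ≤ g.support.card ∧ (g ^ j) x ∈ s ∧ ∀ a, 0 < a → a < j → (g ^ a) x ∉ s := by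
  have hcard : 0 < g.support.card ∧ (g ^ g.support.card) x ∈ s :=
    ⟨Finset.card_pos.mpr ⟨x, hxg⟩, by rwa [hg.isCycleOn_support.pow_card_apply hxg]⟩
  have hret : ∃ j, 0 < j ∧ (g ^ j) x ∈ s := ⟨_, hcard⟩
  obtain ⟨hj0, hjs⟩ := Nat.find_spec hret
  exact ⟨Nat.find hret, hj0, Nat.find_min' hret hcard, hjs,
    fun a ha haj hmem => Nat.find_min hret haj ⟨ha, hmem⟩⟩

theorem Equiv.Perm.mem_support_inv_mul_iff {α : Type*} [DecidableEq α] [Fintype α]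
    {c f : Equiv.Perm α} {y : α} : y ∈ (c⁻¹ * f).support ↔ f y ≠ c y := by
  rw [Equiv.Perm.mem_support, Equiv.Perm.mul_apply, Ne, Equiv.Perm.inv_eq_iff_eq]

theorem Equiv.Perm.image_support_self {α : Type*} [DecidableEq α] [Fintype α]
    (c : Equiv.Perm α) : c '' (c.support : Set α) = c.support := by
  ext y
  simp only [Equiv.image_eq_preimage_symm, Set.mem_preimage, Finset.mem_coe,
    ← Equiv.Perm.inv_def]
  rw [← Equiv.Perm.support_inv, Equiv.Perm.apply_mem_support]

theorem Set.image_inl_union_image_inr_inter {α β : Type*} (A B : Set α) (C D : Set β) :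
    (Sum.inl '' A ∪ Sum.inr '' C) ∩ (Sum.inl '' B ∪ Sum.inr '' D) =
      Sum.inl '' (A ∩ B) ∪ Sum.inr '' (C ∩ D) := by
  ext (y | y) <;> simp

theorem List.formPerm_map_range_apply {α : Type*} [DecidableEq α] {w : ℕ → α} {n : ℕ}
    (hnodup : ((List.range n).map w).Nodup) (hn : w n = w 0) {t : ℕ} (ht : t < n) :
    ((List.range n).map w).formPerm (w t) = w (t + 1) := by
  have hlen : ((List.range n).map w).length = n := by simp
  have h := List.formPerm_apply_getElem _ hnodup t (by omega)
  simp only [List.getElem_map, List.getElem_range, hlen] at h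
  rw [h]
  rcases (Nat.succ_le_of_lt ht).lt_or_eq with ht' | ht'
  · rw [Nat.mod_eq_of_lt ht']
  · rw [← ht', Nat.mod_self, ← hn, ← ht']

theorem Equiv.Perm.exists_isCycle_of_closed_walk {α : Type*} [DecidableEq α] [Fintype α]
    {w : ℕ → α} {n : ℕ} (hn : 2 ≤ n) (hinj : ∀ s < n, ∀ t < n, w s = w t → s = t)
    (hclosed : w n = w 0) :
    ∃ f : Equiv.Perm α, f.IsCycle ∧ (∀ t < n, f (w t) = w (t + 1)) ∧
      ∀ z, z ∈ f.support ↔ ∃ t < n, w t = z := by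
  have hnodup : ((List.range n).map w).Nodup := List.nodup_range.map_on fun s hs t ht =>
    hinj s (List.mem_range.mp hs) t (List.mem_range.mp ht)
  refine ⟨_, List.isCycle_formPerm hnodup (by simpa using hn),
    fun t ht => List.formPerm_map_range_apply hnodup hclosed ht, fun z => ?_⟩
  rw [List.support_formPerm_of_nodup _ hnodup fun z h => by
    have := congrArg List.length h
    simp only [List.length_map, List.length_range, List.length_singleton] at this
    omega]
  simp

namespace SRGraph

open Equiv Finset Function

section Submatrix

variable {n m k l : ℕ} {ρ : Fin k → Fin n} {κ : Fin l → Fin m}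

lemma cycEdges_comp {r : ℕ} (a : Fin r → Fin k) (b : Fin r → Fin l) :
    cycEdges (ρ ∘ a) (κ ∘ b) = Prod.map ρ κ '' cycEdges a b := by
  ext e
  simp only [cycEdges, Set.mem_image, Set.mem_ofPred_eq]
  constructor
  · rintro ⟨j, rfl | rfl⟩
    exacts [⟨_, ⟨j, Or.inl rfl⟩, rfl⟩, ⟨_, ⟨j, Or.inr rfl⟩, rfl⟩]
  · rintro ⟨e, ⟨j, rfl | rfl⟩, rfl⟩
    exacts [⟨j, Or.inl rfl⟩, ⟨j, Or.inr rfl⟩]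

lemma cycVerts_comp {r : ℕ} (a : Fin r → Fin k) (b : Fin r → Fin l) :
    cycVerts (ρ ∘ a) (κ ∘ b) = Sum.map ρ κ '' cycVerts a b := by
  simp only [cycVerts, Set.image_union, ← Set.range_comp]
  rfl

lemma pathVerts_comp {p : ℕ} (u : Fin (p + 1) → Fin k) (w : Fin (p + 1) → Fin l) :
    pathVerts (ρ ∘ u) (κ ∘ w) = Sum.map ρ κ '' pathVerts u w := by
  simp only [pathVerts, Set.image_union, ← Set.range_comp]
  rfl

lemma pathEdges_comp {p : ℕ} (u : Fin (p + 1) → Fin k) (w : Fin (p + 1) → Fin l) :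
    pathEdges (ρ ∘ u) (κ ∘ w) = Prod.map ρ κ '' pathEdges u w := by
  ext e
  simp only [pathEdges, Set.mem_union, Set.mem_ofPred_eq, Set.image_union, Set.mem_image]
  constructor
  · rintro (⟨i, rfl⟩ | ⟨i, rfl⟩)
    exacts [Or.inl ⟨_, ⟨i, rfl⟩, rfl⟩, Or.inr ⟨_, ⟨i, rfl⟩, rfl⟩]
  · rintro (⟨e, ⟨i, rfl⟩, rfl⟩ | ⟨e, ⟨i, rfl⟩, rfl⟩)
    exacts [Or.inl ⟨i, rfl⟩, Or.inr ⟨i, rfl⟩]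

lemma adjOf_image_map (E : Set (Fin k × Fin l)) (x y : Fin k ⊕ Fin l) (h : adjOf E x y) :
    adjOf (Prod.map ρ κ '' E) (Sum.map ρ κ x) (Sum.map ρ κ y) := by
  cases x <;> cases y <;> first | exact h.elim | exact ⟨_, h, rfl⟩

lemma exists_of_adjOf_image_map (hρ : Injective ρ) (hκ : Injective κ) {E : Set (Fin k × Fin l)}
    {x : Fin k ⊕ Fin l} {z : Fin n ⊕ Fin m} (h : adjOf (Prod.map ρ κ '' E) (Sum.map ρ κ x) z) :
    ∃ y, z = Sum.map ρ κ y ∧ adjOf E x y := by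
  rcases x with i | j <;> rcases z with i' | j' <;> try exact h.elim
  · obtain ⟨⟨i₀, j₀⟩, he, hq⟩ := h
    simp only [Prod.map_apply, Prod.mk.injEq] at hq
    obtain ⟨hi, rfl⟩ := hq
    cases hρ hi
    exact ⟨Sum.inr j₀, rfl, he⟩
  · obtain ⟨⟨i₀, j₀⟩, he, hq⟩ := h
    simp only [Prod.map_apply, Prod.mk.injEq] at hq
    obtain ⟨rfl, hj⟩ := hq
    cases hκ hj
    exact ⟨Sum.inl i₀, rfl, he⟩

lemma exists_of_reflTransGen_image_map (hρ : Injective ρ) (hκ : Injective κ)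
    {E : Set (Fin k × Fin l)} {v : Fin k ⊕ Fin l} {z : Fin n ⊕ Fin m}
    (h : Relation.ReflTransGen (adjOf (Prod.map ρ κ '' E)) (Sum.map ρ κ v) z) :
    ∃ y, z = Sum.map ρ κ y ∧ Relation.ReflTransGen (adjOf E) v y := by
  induction h with
  | refl => exact ⟨v, rfl, .refl⟩
  | tail _ hadj ih =>
    obtain ⟨y, rfl, hy⟩ := ih
    obtain ⟨z, rfl, hz⟩ := exists_of_adjOf_image_map hρ hκ hadj
    exact ⟨z, rfl, hy.tail hz⟩

lemma componentOf_image_map (hρ : Injective ρ) (hκ : Injective κ)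
    (E : Set (Fin k × Fin l)) (V : Set (Fin k ⊕ Fin l)) (v : Fin k ⊕ Fin l) :
    componentOf (Prod.map ρ κ '' E) (Sum.map ρ κ '' V) (Sum.map ρ κ v) =
      Sum.map ρ κ '' componentOf E V v := by
  ext z
  constructor
  · rintro ⟨⟨x, hxV, rfl⟩, hreach⟩
    obtain ⟨y, hxy, hy⟩ := exists_of_reflTransGen_image_map hρ hκ hreach
    cases hρ.sumMap hκ hxy
    exact ⟨x, ⟨hxV, hy⟩, rfl⟩
  · rintro ⟨x, ⟨hxV, hreach⟩, rfl⟩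
    exact ⟨⟨x, hxV, rfl⟩, hreach.lift _ (adjOf_image_map E)⟩

lemma SRIntersection.image_map (hρ : Injective ρ) (hκ : Injective κ)
    {V : Set (Fin k ⊕ Fin l)} {E : Set (Fin k × Fin l)} (h : SRIntersection V E) :
    SRIntersection (Sum.map ρ κ '' V) (Prod.map ρ κ '' E) := by
  refine ⟨h.1.image _, ?_⟩
  rintro _ ⟨v, hv, rfl⟩
  obtain ⟨p, u, w, hu, hw, hVerts, hEdges⟩ := h.2 v hv
  refine ⟨p, ρ ∘ u, κ ∘ w, hρ.comp hu, hκ.comp hw, ?_, ?_⟩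
  · rw [pathVerts_comp, hVerts, componentOf_image_map hρ hκ]
  · rw [pathEdges_comp, hEdges, componentOf_image_map hρ hκ]
    ext e
    constructor
    · rintro ⟨e, ⟨he, hC⟩, rfl⟩
      exact ⟨⟨e, he, rfl⟩, ⟨_, hC, rfl⟩⟩
    · rintro ⟨⟨e, he, rfl⟩, ⟨x, hx, hxe⟩⟩
      refine ⟨e, ⟨he, ?_⟩, rfl⟩
      rwa [← hρ.sumMap hκ (hxe.trans (Sum.map_inl ρ κ e.1).symm)]

lemma IsCyc.of_submatrix {S : Matrix (Fin n) (Fin m) ℝ} (hρ : Injective ρ) (hκ : Injective κ)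
    {r : ℕ} {a : Fin r → Fin k} {b : Fin r → Fin l} (h : IsCyc (S.submatrix ρ κ) a b) :
    IsCyc S (ρ ∘ a) (κ ∘ b) :=
  ⟨h.1, hρ.comp h.2.1, hκ.comp h.2.2.1, h.2.2.2⟩

lemma TwoECyclesWithSRIntersection.of_submatrix {S : Matrix (Fin n) (Fin m) ℝ}
    (hρ : Injective ρ) (hκ : Injective κ) (h : TwoECyclesWithSRIntersection (S.submatrix ρ κ)) :
    TwoECyclesWithSRIntersection S := by
  obtain ⟨r₁, a₁, b₁, r₂, a₂, b₂, hc₁, hp₁, hc₂, hp₂, hne, hSR⟩ := h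
  have hprod : Injective (Prod.map ρ κ) := hρ.prodMap hκ
  refine ⟨r₁, ρ ∘ a₁, κ ∘ b₁, r₂, ρ ∘ a₂, κ ∘ b₂, hc₁.of_submatrix hρ hκ, hp₁,
    hc₂.of_submatrix hρ hκ, hp₂, ?_, ?_⟩
  · rw [cycEdges_comp, cycEdges_comp]
    exact fun heq => hne (Set.image_injective.mpr hprod heq)
  · rw [cycEdges_comp, cycEdges_comp, cycVerts_comp, cycVerts_comp,
      ← Set.image_inter (hρ.sumMap hκ), ← Set.image_inter hprod]
    exact hSR.image_map hρ hκ

lemma ConditionStar.submatrix {S : Matrix (Fin n) (Fin m) ℝ} (hS : ConditionStar S)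
    (hρ : Injective ρ) (hκ : Injective κ) : ConditionStar (S.submatrix ρ κ) :=
  ⟨fun _ _ _ hcyc hpar => hS.1 _ _ _ (hcyc.of_submatrix hρ hκ) hpar,
    fun h => hS.2 (h.of_submatrix hρ hκ)⟩

end Submatrix

section Path

variable {n m : ℕ}

instance (E : Set (Fin n × Fin m)) : Std.Symm (adjOf E) where
  symm x y h := by cases x <;> cases y <;> first | exact h.elim | exact h

lemma reflTransGen_of_mem_pathVerts {p : ℕ} (u : Fin (p + 1) → Fin n) (w : Fin (p + 1) → Fin m)
    {v : Fin n ⊕ Fin m} (hv : v ∈ pathVerts u w) :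
    Relation.ReflTransGen (adjOf (pathEdges u w)) (Sum.inl (u 0)) v := by
  have key : ∀ i, Relation.ReflTransGen (adjOf (pathEdges u w)) (Sum.inl (u 0)) (Sum.inl (u i)) ∧
      Relation.ReflTransGen (adjOf (pathEdges u w)) (Sum.inl (u 0)) (Sum.inr (w i)) := by
    intro i
    induction i using Fin.induction with
    | zero => exact ⟨.refl, .single (Or.inl ⟨0, rfl⟩)⟩
    | succ i ih =>
      have hu : Relation.ReflTransGen (adjOf (pathEdges u w)) (Sum.inl (u 0))
          (Sum.inl (u i.succ)) := ih.2.tail (Or.inr ⟨i, rfl⟩)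
      exact ⟨hu, hu.tail (Or.inl ⟨i.succ, rfl⟩)⟩
  rcases hv with ⟨i, rfl⟩ | ⟨i, rfl⟩
  exacts [(key i).1, (key i).2]

lemma SRIntersection.path {p : ℕ} {u : Fin (p + 1) → Fin n} {w : Fin (p + 1) → Fin m}
    (hu : Injective u) (hw : Injective w) : SRIntersection (pathVerts u w) (pathEdges u w) := by
  have hcomp : ∀ v ∈ pathVerts u w, componentOf (pathEdges u w) (pathVerts u w) v =
      pathVerts u w := fun v hv => Set.sep_eq_self_iff_mem_true.mpr fun x hx =>
    (Std.Symm.symm _ _ (reflTransGen_of_mem_pathVerts u w hv)).trans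
      (reflTransGen_of_mem_pathVerts u w hx)
  refine ⟨⟨_, Or.inl ⟨0, rfl⟩⟩, fun v hv => ⟨p, u, w, hu, hw, (hcomp v hv).symm, ?_⟩⟩
  rw [hcomp v hv]
  refine (Set.sep_eq_self_iff_mem_true.mpr ?_).symm
  rintro _ (⟨i, rfl⟩ | ⟨i, rfl⟩)
  exacts [Or.inl ⟨i, rfl⟩, Or.inl ⟨i.succ, rfl⟩]

lemma pathVerts_eq {n m p : ℕ} (u : Fin (p + 1) → Fin n) (w : Fin (p + 1) → Fin m) :
    pathVerts u w = Sum.inl '' Set.range u ∪ Sum.inr '' Set.range w := by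
  rw [pathVerts, Set.range_comp, Set.range_comp]

end Path

variable {k : ℕ}

section Term

def detTerm (M : Matrix (Fin k) (Fin k) ℝ) (σ : Perm (Fin k)) : ℝ :=
  ((Perm.sign σ : ℤ) : ℝ) * ∏ i, M i (σ i)

noncomputable def termSign (M : Matrix (Fin k) (Fin k) ℝ) (σ : Perm (Fin k)) : ℝ :=
  detTerm (M.map Real.sign) σ

variable {M : Matrix (Fin k) (Fin k) ℝ} {σ τ : Perm (Fin k)}

lemma det_eq_sum_detTerm (M : Matrix (Fin k) (Fin k) ℝ) : M.det = ∑ σ, detTerm M σ := by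
  rw [← Matrix.det_transpose, Matrix.det_apply]
  refine Finset.sum_congr rfl fun σ _ => ?_
  rw [Units.smul_def, zsmul_eq_mul]
  rfl

lemma detTerm_one (M : Matrix (Fin k) (Fin k) ℝ) : detTerm M 1 = ∏ i, M i i := by
  simp [detTerm]

lemma detTerm_eq_zero (h : ∃ i, M i (σ i) = 0) : detTerm M σ = 0 := by
  obtain ⟨i, hi⟩ := h
  rw [detTerm, Finset.prod_eq_zero (Finset.mem_univ i) hi, mul_zero]

lemma detTerm_mul_of_disjoint (M : Matrix (Fin k) (Fin k) ℝ) (h : Perm.Disjoint σ τ) :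
    detTerm M (σ * τ) * detTerm M 1 = detTerm M σ * detTerm M τ := by
  have hpt : ∀ i, M i ((σ * τ) i) * M i i = M i (σ i) * M i (τ i) := by
    intro i
    rcases h i with hσ | hτ
    · rw [h.commute.eq, Perm.mul_apply, hσ, mul_comm]
    · rw [Perm.mul_apply, hτ]
  simp only [detTerm, Perm.sign_mul, Perm.sign_one, Units.val_mul, Int.cast_mul, Units.val_one,
    Int.cast_one, Perm.one_apply]
  calc _ = ((Perm.sign σ : ℤ) : ℝ) * (Perm.sign τ : ℤ) * ∏ i, (M i ((σ * τ) i) * M i i) := by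
        rw [Finset.prod_mul_distrib]; ring
    _ = _ := by rw [Finset.prod_congr rfl fun i _ => hpt i, Finset.prod_mul_distrib]; ring

lemma detTerm_eq_termSign_mul_abs (M : Matrix (Fin k) (Fin k) ℝ) (σ : Perm (Fin k)) :
    detTerm M σ = termSign M σ * |∏ i, M i (σ i)| := by
  simp only [termSign, detTerm, Matrix.map_apply, Finset.abs_prod, mul_assoc,
    ← Finset.prod_mul_distrib, Real.sign_mul_abs]

lemma termSign_mul_self (h : ∀ i, M i (σ i) ≠ 0) : termSign M σ * termSign M σ = 1 := by
  have hsign : ((Perm.sign σ : ℤ) : ℝ) * ((Perm.sign σ : ℤ) : ℝ) = 1 := by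
    rw [← Int.cast_mul, ← Units.val_mul, Int.units_mul_self, Units.val_one, Int.cast_one]
  calc termSign M σ * termSign M σ = ((Perm.sign σ : ℤ) : ℝ) * ((Perm.sign σ : ℤ) : ℝ) *
        ∏ i, (Real.sign (M i (σ i)) * Real.sign (M i (σ i))) := by
        simp only [termSign, detTerm, Matrix.map_apply, Finset.prod_mul_distrib]; ring
    _ = 1 := by simp [hsign, Real.sign_mul_self_of_ne_zero (h _)]

lemma termSign_ne_zero (h : ∀ i, M i (σ i) ≠ 0) : termSign M σ ≠ 0 :=
  left_ne_zero_of_mul_eq_one (termSign_mul_self h)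

lemma termSign_eq_or_eq_neg (hd : ∀ i, M i i ≠ 0) (hσ : ∀ i, M i (σ i) ≠ 0) :
    termSign M σ = termSign M 1 ∨ termSign M σ = -termSign M 1 :=
  mul_self_eq_mul_self_iff.mp <| by
    rw [termSign_mul_self hσ, termSign_mul_self (σ := 1) hd]

lemma SameSignPattern.eq_zero_iff {B : Matrix (Fin k) (Fin k) ℝ} (hB : SameSignPattern B M)
    (i j : Fin k) : B i j = 0 ↔ M i j = 0 := by
  rw [← Real.sign_eq_zero_iff, hB, Real.sign_eq_zero_iff]

lemma termSign_eq_of_sameSignPattern {B : Matrix (Fin k) (Fin k) ℝ} (hB : SameSignPattern B M) :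
    termSign B = termSign M := by
  have : B.map Real.sign = M.map Real.sign := Matrix.ext hB
  funext σ
  rw [termSign, termSign, this]

end Term

section Orbit

/-- Paired with the columns `α ∘ orbitRows π x`, these rows form the SR cycle joining S-vertex `y`
to the R-vertices `α y` and `α (π y)`; for `α = 1`, the cycle through the diagonal entries and the
entries `(y, π y)`. -/
def orbitRows (π : Perm (Fin k)) (x : Fin k) : Fin #π.support → Fin k :=
  fun t => (π ^ (t : ℕ)) x

variable {π : Perm (Fin k)} {x : Fin k}

lemma orbitRows_injective (hπ : π.IsCycle) (hx : x ∈ π.support) : Injective (orbitRows π x) :=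
  fun s t h => Fin.ext (hπ.eq_of_pow_apply_eq hx s.isLt t.isLt h)

lemma orbitRows_finRotate (hπ : π.IsCycle) (hx : x ∈ π.support) (t : Fin #π.support) :
    orbitRows π x (finRotate _ t) = π (orbitRows π x t) := by
  rw [orbitRows, orbitRows, ← Perm.mul_apply, ← pow_succ',
    hπ.isCycleOn_support.pow_apply_eq_pow_apply hx, finRotate_apply, Fin.val_add]
  exact (Nat.mod_modEq _ _).trans (Nat.ModEq.add_left _ (Nat.mod_modEq _ _))

lemma range_orbitRows (hπ : π.IsCycle) (hx : x ∈ π.support) :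
    Set.range (orbitRows π x) = π.support := by
  refine Set.Subset.antisymm (Set.range_subset_iff.mpr fun t => Perm.pow_apply_mem_support.mpr hx)
    fun y hy => ?_
  obtain ⟨t, ht, rfl⟩ := hπ.isCycleOn_support.exists_pow_eq hx hy
  exact ⟨⟨t, ht⟩, rfl⟩

lemma prod_orbitRows {R : Type*} [CommMonoid R] (hπ : π.IsCycle) (hx : x ∈ π.support)
    (F : Fin k → R) : ∏ t, F (orbitRows π x t) = ∏ y ∈ π.support, F y := by
  rw [← Finset.prod_image fun s _ t _ h => orbitRows_injective hπ hx h]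
  congr
  rw [← Finset.coe_inj, Finset.coe_image, Finset.coe_univ, Set.image_univ, range_orbitRows hπ hx]

end Orbit

section OrbitCycle

variable (M : Matrix (Fin k) (Fin k) ℝ) (α : Perm (Fin k)) {π : Perm (Fin k)} {x : Fin k}

lemma isCyc_orbitRows (hπ : π.IsCycle) (hx : x ∈ π.support)
    (h₁ : ∀ y ∈ π.support, M y (α y) ≠ 0) (h₂ : ∀ y ∈ π.support, M y (α (π y)) ≠ 0) :
    IsCyc M (orbitRows π x) (α ∘ orbitRows π x) := by
  refine ⟨hπ.two_le_card_support, orbitRows_injective hπ hx,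
    α.injective.comp (orbitRows_injective hπ hx), fun t => ?_, fun t => ?_⟩
  · exact h₁ _ (Perm.pow_apply_mem_support.mpr hx)
  · rw [comp_apply, orbitRows_finRotate hπ hx]
    exact h₂ _ (Perm.pow_apply_mem_support.mpr hx)

lemma parity_orbitRows (hπ : π.IsCycle) (hx : x ∈ π.support) :
    parity M (orbitRows π x) (α ∘ orbitRows π x) =
      (-1) ^ #π.support * ∏ y ∈ π.support, Real.sign (M y (α y)) * Real.sign (M y (α (π y))) := by
  simp only [parity, comp_apply, orbitRows_finRotate hπ hx]
  rw [prod_orbitRows hπ hx (fun y => Real.sign (M y (α y)) * Real.sign (M y (α (π y))))]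

lemma isSCyc_orbitRows_iff (hπ : π.IsCycle) (hx : x ∈ π.support) :
    IsSCyc M (orbitRows π x) (α ∘ orbitRows π x) ↔
      ∏ y ∈ π.support, |M y (α y)| = ∏ y ∈ π.support, |M y (α (π y))| := by
  simp only [IsSCyc, comp_apply, orbitRows_finRotate hπ hx]
  rw [prod_orbitRows hπ hx (fun y => |M y (α y)|), prod_orbitRows hπ hx (fun y => |M y (α (π y))|)]

lemma cycEdges_orbitRows (hπ : π.IsCycle) (hx : x ∈ π.support) :
    cycEdges (orbitRows π x) (α ∘ orbitRows π x) =
      {e | e.1 ∈ π.support ∧ (e.2 = α e.1 ∨ e.2 = α (π e.1))} := by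
  ext ⟨y, z⟩
  simp only [cycEdges, comp_apply, orbitRows_finRotate hπ hx, Set.mem_ofPred_eq, Prod.mk.injEq]
  constructor
  · rintro ⟨t, ⟨rfl, rfl⟩ | ⟨rfl, rfl⟩⟩
    exacts [⟨Perm.pow_apply_mem_support.mpr hx, Or.inl rfl⟩,
      ⟨Perm.pow_apply_mem_support.mpr hx, Or.inr rfl⟩]
  · rintro ⟨hy, hz⟩
    rw [← Finset.mem_coe, ← range_orbitRows hπ hx] at hy
    obtain ⟨t, rfl⟩ := hy
    exact ⟨t, hz.imp (⟨rfl, ·⟩) (⟨rfl, ·⟩)⟩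

lemma cycVerts_orbitRows (hπ : π.IsCycle) (hx : x ∈ π.support) :
    cycVerts (orbitRows π x) (α ∘ orbitRows π x) =
      Sum.inl '' (π.support : Set (Fin k)) ∪ Sum.inr '' (α '' π.support) := by
  rw [cycVerts, Set.range_comp, Set.range_comp, Set.range_comp, range_orbitRows hπ hx]

/-- The matchings `α` and `α * π` of rows to columns differ exactly along the SR cycle of `π`, so
comparing their determinant terms entry by entry leaves only the edges of that cycle. -/
lemma termSign_mul_termSign_mul_eq_neg_parity (hα : ∀ i, M i (α i) ≠ 0) (hπ : π.IsCycle)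
    (hx : x ∈ π.support) :
    termSign M α * termSign M (α * π) = -parity M (orbitRows π x) (α ∘ orbitRows π x) := by
  have hsign : ((Perm.sign α : ℤ) : ℝ) * ((Perm.sign (α * π) : ℤ) : ℝ) =
      -(-1) ^ #π.support := by
    rw [← Int.cast_mul, ← Units.val_mul, Perm.sign_mul, ← mul_assoc, Int.units_mul_self, one_mul,
      hπ.sign]
    push_cast
    ring
  have hfix : ∀ i ∉ π.support,
      Real.sign (M i (α i)) * Real.sign (M i ((α * π) i)) = 1 := fun i hi => by
    rw [Perm.mul_apply, Perm.notMem_support.mp hi, Real.sign_mul_self_of_ne_zero (hα i)]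
  rw [parity_orbitRows M α hπ hx, termSign, termSign, detTerm, detTerm]
  simp only [Matrix.map_apply]
  rw [mul_mul_mul_comm, hsign, ← Finset.prod_mul_distrib,
    ← Finset.prod_subset (Finset.subset_univ π.support) fun i _ hi => hfix i hi]
  simp only [Perm.mul_apply]
  ring

end OrbitCycle

section Diagonal

variable {M : Matrix (Fin k) (Fin k) ℝ} {c : Perm (Fin k)} {x : Fin k}

lemma cycEdges_orbitRows_one (hc : c.IsCycle) (hx : x ∈ c.support) :
    cycEdges (orbitRows c x) (orbitRows c x) = {e | e.1 ∈ c.support ∧ (e.2 = e.1 ∨ e.2 = c e.1)} :=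
  cycEdges_orbitRows 1 hc hx

lemma cycVerts_orbitRows_one (hc : c.IsCycle) (hx : x ∈ c.support) :
    cycVerts (orbitRows c x) (orbitRows c x) =
      Sum.inl '' (c.support : Set (Fin k)) ∪ Sum.inr '' c.support := by
  simpa using cycVerts_orbitRows 1 hc hx

lemma isCyc_orbitRows_one (hd : ∀ i, M i i ≠ 0) (hcv : ∀ i, M i (c i) ≠ 0) (hc : c.IsCycle)
    (hx : x ∈ c.support) : IsCyc M (orbitRows c x) (orbitRows c x) :=
  isCyc_orbitRows M 1 hc hx (fun y _ => hd y) (fun y _ => hcv y)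

lemma parity_orbitRows_one (hd : ∀ i, M i i ≠ 0) (hc : c.IsCycle) (hx : x ∈ c.support) :
    parity M (orbitRows c x) (orbitRows c x) = -(termSign M 1 * termSign M c) := by
  have h := termSign_mul_termSign_mul_eq_neg_parity M 1 hd hc hx
  rw [one_mul] at h
  change _ = -parity M (orbitRows c x) (orbitRows c x) at h
  linarith

lemma parity_orbitRows_one_eq_one (hd : ∀ i, M i i ≠ 0) (hc : c.IsCycle) (hx : x ∈ c.support)
    (hce : termSign M c = -termSign M 1) : parity M (orbitRows c x) (orbitRows c x) = 1 := by
  rw [parity_orbitRows_one hd hc hx, hce, mul_neg, neg_neg, termSign_mul_self (σ := 1) hd]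

end Diagonal

def chainPath (c : Perm (Fin k)) (x₀ : Fin k) (q : ℕ) (i : Fin (q + 1)) : Fin k :=
  (c ^ (q - i)) x₀

def arcPath (c : Perm (Fin k)) (x₀ : Fin k) (q p : ℕ) (i : Fin (p + 1)) : Fin k :=
  (c ^ (q + i)) x₀

section ChainAndArc

variable {c : Perm (Fin k)} {x₀ : Fin k} {q p : ℕ}

lemma chainPath_injective (hc : c.IsCycle) (hx : x₀ ∈ c.support) (hq : q < #c.support) :
    Injective (chainPath c x₀ q) := fun i j hij => Fin.ext <| by
  have := hc.eq_of_pow_apply_eq hx (by omega) (by omega) hij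
  omega

lemma chainPath_sub {a : ℕ} (ha : a ≤ q) : chainPath c x₀ q ⟨q - a, by omega⟩ = (c ^ a) x₀ := by
  rw [chainPath, Nat.sub_sub_self ha]

lemma chainPath_castSucc (i : Fin q) :
    chainPath c x₀ q i.castSucc = c (chainPath c x₀ q i.succ) := by
  rw [chainPath, chainPath, ← Perm.pow_succ_apply, Fin.val_castSucc, Fin.val_succ]
  congr 2
  omega

lemma arcPath_injective (hc : c.IsCycle) (hx : x₀ ∈ c.support) (hp : q + p < #c.support) :
    Injective (arcPath c x₀ q p) := fun i j hij => Fin.ext <| by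
  have := hc.eq_of_pow_apply_eq hx (by omega) (by omega) hij
  omega

lemma arcPath_succ (i : Fin p) : arcPath c x₀ q p i.succ = c (arcPath c x₀ q p i.castSucc) := by
  rw [arcPath, arcPath, ← Perm.pow_succ_apply, Fin.val_succ, Fin.val_castSucc, add_assoc]

end ChainAndArc

structure BranchesOnce (c f : Perm (Fin k)) (x₀ : Fin k) (q : ℕ) : Prop where
  mem_support_left : x₀ ∈ c.support
  mem_support_right : x₀ ∈ f.support
  apply_eq : ∀ a < q, f ((c ^ a) x₀) = c ((c ^ a) x₀)
  apply_ne : f ((c ^ q) x₀) ≠ c ((c ^ q) x₀)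
  support_inter : ∀ y ∈ c.support, y ∈ f.support → ∃ a ≤ q, y = (c ^ a) x₀

namespace BranchesOnce

variable {c f : Perm (Fin k)} {x₀ : Fin k} {q : ℕ}

lemma pow_apply_eq (h : BranchesOnce c f x₀ q) : ∀ a ≤ q, (f ^ a) x₀ = (c ^ a) x₀
  | 0, _ => rfl
  | a + 1, ha => by
    rw [Perm.pow_succ_apply, Perm.pow_succ_apply, h.pow_apply_eq a (by omega),
      h.apply_eq a (by omega)]

lemma symm (h : BranchesOnce c f x₀ q) : BranchesOnce f c x₀ q where
  mem_support_left := h.mem_support_right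
  mem_support_right := h.mem_support_left
  apply_eq a ha := by rw [h.pow_apply_eq a ha.le]; exact (h.apply_eq a ha).symm
  apply_ne := by rw [h.pow_apply_eq q le_rfl]; exact h.apply_ne.symm
  support_inter y hf hc := by
    obtain ⟨a, ha, rfl⟩ := h.support_inter y hc hf
    exact ⟨a, ha, (h.pow_apply_eq a ha).symm⟩

lemma mem_support_inter_iff (h : BranchesOnce c f x₀ q) {y : Fin k} :
    y ∈ c.support ∧ y ∈ f.support ↔ ∃ a ≤ q, y = (c ^ a) x₀ := by
  refine ⟨fun hy => h.support_inter y hy.1 hy.2, ?_⟩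
  rintro ⟨a, ha, rfl⟩
  refine ⟨Perm.pow_apply_mem_support.mpr h.mem_support_left, ?_⟩
  rw [← h.pow_apply_eq a ha]
  exact Perm.pow_apply_mem_support.mpr h.mem_support_right

lemma lt_card (h : BranchesOnce c f x₀ q) (hc : c.IsCycle) : q < #c.support := by
  by_contra hq
  have hmod : (c ^ q) x₀ = (c ^ (q % #c.support)) x₀ :=
    (hc.isCycleOn_support.pow_apply_eq_pow_apply h.mem_support_left).mpr (Nat.mod_modEq _ _).symm
  refine h.apply_ne (hmod ▸ h.apply_eq _ ?_)
  exact (Nat.mod_lt _ (card_pos.mpr ⟨x₀, h.mem_support_left⟩)).trans_le (not_lt.mp hq)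

lemma pow_apply_notMem_support (h : BranchesOnce c f x₀ q) (hc : c.IsCycle) {a : ℕ}
    (hqa : q < a) (ha : a < #c.support) : (c ^ a) x₀ ∉ f.support := fun hf => by
  obtain ⟨b, hb, hab⟩ := h.support_inter _ (Perm.pow_apply_mem_support.mpr h.mem_support_left) hf
  have := hc.eq_of_pow_apply_eq h.mem_support_left ha (hb.trans_lt (h.lt_card hc)) hab
  omega

lemma apply_ne_iff (h : BranchesOnce c f x₀ q) (hc : c.IsCycle) {a : ℕ} (ha : a < #c.support) :
    f ((c ^ a) x₀) ≠ c ((c ^ a) x₀) ↔ q ≤ a := by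
  refine ⟨fun hne => not_lt.mp fun hlt => hne (h.apply_eq a hlt), fun hqa => ?_⟩
  rcases hqa.eq_or_lt with rfl | hqa
  · exact h.apply_ne
  · rw [Perm.notMem_support.mp (h.pow_apply_notMem_support hc hqa ha)]
    exact (Perm.mem_support.mp (Perm.pow_apply_mem_support.mpr h.mem_support_left)).symm

lemma range_chainPath (h : BranchesOnce c f x₀ q) :
    Set.range (chainPath c x₀ q) = (c.support : Set (Fin k)) ∩ f.support := by
  ext y
  simp only [Set.mem_range, Set.mem_inter_iff, Finset.mem_coe, h.mem_support_inter_iff]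
  constructor
  · rintro ⟨i, rfl⟩
    exact ⟨q - i, by omega, rfl⟩
  · rintro ⟨a, ha, rfl⟩
    exact ⟨_, chainPath_sub ha⟩

lemma cycEdges_inter_cycEdges (h : BranchesOnce c f x₀ q) (hc : c.IsCycle) (hf : f.IsCycle) :
    cycEdges (orbitRows c x₀) (orbitRows c x₀) ∩ cycEdges (orbitRows f x₀) (orbitRows f x₀) =
      pathEdges (chainPath c x₀ q) (chainPath c x₀ q) := by
  rw [cycEdges_orbitRows_one hc h.mem_support_left, cycEdges_orbitRows_one hf h.mem_support_right]
  ext ⟨y, z⟩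
  simp only [pathEdges, Set.mem_inter_iff, Set.mem_union, Set.mem_ofPred_eq, Prod.mk.injEq]
  constructor
  · rintro ⟨⟨hyc, rfl | rfl⟩, hyf, hz⟩
    · obtain ⟨a, ha, rfl⟩ := h.support_inter _ hyc hyf
      exact Or.inl ⟨_, (chainPath_sub ha).symm, (chainPath_sub ha).symm⟩
    · obtain ⟨a, ha, rfl⟩ := h.support_inter _ hyc hyf
      have haq : a < q := lt_of_le_of_ne ha fun hqa => by
        rcases hz with hz | hz
        exacts [Perm.mem_support.mp hyc hz, h.apply_ne (hqa ▸ hz.symm)]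
      refine Or.inr ⟨⟨q - a - 1, by omega⟩, ?_, ?_⟩
      · rw [← chainPath_sub ha]
        exact congrArg _ (Fin.ext (by simp; omega))
      · rw [chainPath_castSucc, ← chainPath_sub ha]
        exact congrArg (c ∘ _) (Fin.ext (by simp; omega))
  · rintro (⟨i, rfl, rfl⟩ | ⟨i, rfl, rfl⟩)
    · have hy : chainPath c x₀ q i ∈ (c.support : Set (Fin k)) ∩ f.support :=
        h.range_chainPath ▸ ⟨i, rfl⟩
      exact ⟨⟨hy.1, Or.inl rfl⟩, hy.2, Or.inl rfl⟩
    · have hy : chainPath c x₀ q i.succ ∈ (c.support : Set (Fin k)) ∩ f.support :=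
        h.range_chainPath ▸ ⟨_, rfl⟩
      have hagree : f (chainPath c x₀ q i.succ) = c (chainPath c x₀ q i.succ) :=
        h.apply_eq (q - (i.succ : ℕ)) (by rw [Fin.val_succ]; omega)
      rw [chainPath_castSucc]
      exact ⟨⟨hy.1, Or.inr rfl⟩, hy.2, Or.inr hagree.symm⟩

lemma srIntersection_orbitRows (h : BranchesOnce c f x₀ q) (hc : c.IsCycle) (hf : f.IsCycle) :
    SRIntersection
      (cycVerts (orbitRows c x₀) (orbitRows c x₀) ∩ cycVerts (orbitRows f x₀) (orbitRows f x₀))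
      (cycEdges (orbitRows c x₀) (orbitRows c x₀) ∩
        cycEdges (orbitRows f x₀) (orbitRows f x₀)) := by
  rw [cycVerts_orbitRows_one hc h.mem_support_left, cycVerts_orbitRows_one hf h.mem_support_right,
    Set.image_inl_union_image_inr_inter, ← h.range_chainPath, ← pathVerts_eq,
    h.cycEdges_inter_cycEdges hc hf]
  have hu := chainPath_injective hc h.mem_support_left (h.lt_card hc)
  exact .path hu hu

lemma inv_mul_pow_apply (h : BranchesOnce c f x₀ q) (hf : f.IsCycle) :
    ∀ b, q + b < #f.support → ((c⁻¹ * f) ^ b) ((c ^ q) x₀) = (f ^ (q + b)) x₀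
  | 0, _ => (h.pow_apply_eq q le_rfl).symm
  | b + 1, hb => by
    rw [Perm.pow_succ_apply, inv_mul_pow_apply h hf b (by omega), Perm.mul_apply,
      ← Perm.pow_succ_apply, Perm.inv_eq_iff_eq, ← add_assoc]
    exact (Perm.notMem_support.mp
      (h.symm.pow_apply_notMem_support hf (a := q + b + 1) (by omega) (by omega))).symm

lemma inv_mul_inv_pow_apply (h : BranchesOnce c f x₀ q) (hc : c.IsCycle) :
    ∀ a, q + a < #c.support → ((c⁻¹ * f)⁻¹ ^ a) ((c ^ q) x₀) = (c ^ (q + a)) x₀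
  | 0, _ => rfl
  | a + 1, ha => by
    rw [Perm.pow_succ_apply, inv_mul_inv_pow_apply h hc a (by omega), mul_inv_rev, inv_inv,
      Perm.mul_apply, ← Perm.pow_succ_apply, Perm.inv_eq_iff_eq, ← add_assoc]
    exact (Perm.notMem_support.mp
      (h.pow_apply_notMem_support hc (a := q + a + 1) (by omega) (by omega))).symm

lemma isCycle_inv_mul (h : BranchesOnce c f x₀ q) (hc : c.IsCycle) (hf : f.IsCycle) :
    (c⁻¹ * f).IsCycle := by
  refine ⟨(c ^ q) x₀, Perm.mem_support.mp (Perm.mem_support_inv_mul_iff.mpr h.apply_ne),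
    fun y hy => ?_⟩
  rw [← Perm.mem_support, Perm.mem_support_inv_mul_iff] at hy
  by_cases hyc : y ∈ c.support
  · obtain ⟨a, ha, rfl⟩ := hc.isCycleOn_support.exists_pow_eq h.mem_support_left hyc
    have hqa := (h.apply_ne_iff hc ha).mp hy
    refine Perm.sameCycle_inv.mp ⟨(a - q : ℕ), ?_⟩
    rw [zpow_natCast, h.inv_mul_inv_pow_apply hc _ (by omega)]
    congr 2
    omega
  · have hyf : y ∈ f.support := by
      rw [Perm.mem_support]
      rwa [Perm.notMem_support.mp hyc] at hy
    obtain ⟨b, hb, rfl⟩ := hf.isCycleOn_support.exists_pow_eq h.mem_support_right hyf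
    have hqb : q < b := not_le.mp fun hbq =>
      hyc (h.pow_apply_eq b hbq ▸ Perm.pow_apply_mem_support.mpr h.mem_support_left)
    refine ⟨(b - q : ℕ), ?_⟩
    rw [zpow_natCast, h.inv_mul_pow_apply hf _ (by omega)]
    congr 2
    omega

lemma range_arcPath (h : BranchesOnce c f x₀ q) (hc : c.IsCycle) :
    Set.range (arcPath c x₀ q (#c.support - q - 1)) =
      (c.support : Set (Fin k)) ∩ (c⁻¹ * f).support := by
  have hq := h.lt_card hc
  ext y
  simp only [Set.mem_range, Set.mem_inter_iff, Finset.mem_coe, Perm.mem_support_inv_mul_iff]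
  constructor
  · rintro ⟨i, rfl⟩
    exact ⟨Perm.pow_apply_mem_support.mpr h.mem_support_left,
      (h.apply_ne_iff hc (by omega)).mpr (by omega)⟩
  · rintro ⟨hyc, hy⟩
    obtain ⟨a, ha, rfl⟩ := hc.isCycleOn_support.exists_pow_eq h.mem_support_left hyc
    have hqa := (h.apply_ne_iff hc ha).mp hy
    exact ⟨⟨a - q, by omega⟩, by rw [arcPath, Nat.add_sub_cancel' hqa]⟩

lemma apply_arcPath_eq_self_iff (h : BranchesOnce c f x₀ q) (hc : c.IsCycle)
    (i : Fin (#c.support - q - 1 + 1)) :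
    f (arcPath c x₀ q _ i) = arcPath c x₀ q _ i ↔ i ≠ 0 := by
  have hq := h.lt_card hc
  rcases Fin.eq_zero_or_eq_succ i with rfl | ⟨j, rfl⟩
  · simp only [arcPath, Fin.val_zero, add_zero, ne_eq, not_true_eq_false, iff_false]
    exact Perm.mem_support.mp (h.mem_support_inter_iff.mpr ⟨q, le_rfl, rfl⟩).2
  · simp only [arcPath, Fin.val_succ, ne_eq, Fin.succ_ne_zero, not_false_eq_true, iff_true]
    exact Perm.notMem_support.mp (h.pow_apply_notMem_support hc (by omega) (by omega))

lemma cycEdges_inter_cycEdges_inv_mul (h : BranchesOnce c f x₀ q) (hc : c.IsCycle)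
    (hf : f.IsCycle) :
    cycEdges (orbitRows c x₀) (orbitRows c x₀) ∩
        cycEdges (orbitRows (c⁻¹ * f) ((c ^ q) x₀)) (c ∘ orbitRows (c⁻¹ * f) ((c ^ q) x₀)) =
      pathEdges (arcPath c x₀ q (#c.support - q - 1))
        (c ∘ arcPath c x₀ q (#c.support - q - 1)) := by
  rw [cycEdges_orbitRows_one hc h.mem_support_left,
    cycEdges_orbitRows c (h.isCycle_inv_mul hc hf) (Perm.mem_support_inv_mul_iff.mpr h.apply_ne)]
  ext ⟨y, z⟩
  simp only [pathEdges, Set.mem_inter_iff, Set.mem_union, Set.mem_ofPred_eq, Prod.mk.injEq,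
    Perm.mul_apply, Perm.coe_inv, Equiv.apply_symm_apply, comp_apply]
  constructor
  · rintro ⟨⟨hyc, hz⟩, hyπ, hz'⟩
    obtain ⟨i, rfl⟩ : y ∈ Set.range (arcPath c x₀ q (#c.support - q - 1)) :=
      h.range_arcPath hc ▸ ⟨hyc, hyπ⟩
    rcases hz with rfl | rfl
    · have hi : i ≠ 0 := (h.apply_arcPath_eq_self_iff hc i).mp
        (hz'.resolve_left fun h' => Perm.mem_support.mp hyc h'.symm).symm
      obtain ⟨j, rfl⟩ := Fin.exists_succ_eq.mpr hi
      exact Or.inr ⟨j, rfl, arcPath_succ j⟩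
    · exact Or.inl ⟨i, rfl, rfl⟩
  · rintro (⟨i, rfl, rfl⟩ | ⟨j, rfl, rfl⟩)
    · have hy : arcPath c x₀ q _ i ∈ (c.support : Set (Fin k)) ∩ (c⁻¹ * f).support :=
        h.range_arcPath hc ▸ ⟨i, rfl⟩
      exact ⟨⟨hy.1, Or.inr rfl⟩, hy.2, Or.inl rfl⟩
    · have hy : arcPath c x₀ q _ j.succ ∈ (c.support : Set (Fin k)) ∩ (c⁻¹ * f).support :=
        h.range_arcPath hc ▸ ⟨_, rfl⟩
      rw [← arcPath_succ]
      exact ⟨⟨hy.1, Or.inl rfl⟩, hy.2,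
        Or.inr ((h.apply_arcPath_eq_self_iff hc _).mpr (Fin.succ_ne_zero j)).symm⟩

lemma srIntersection_inv_mul (h : BranchesOnce c f x₀ q) (hc : c.IsCycle) (hf : f.IsCycle) :
    SRIntersection
      (cycVerts (orbitRows c x₀) (orbitRows c x₀) ∩
        cycVerts (orbitRows (c⁻¹ * f) ((c ^ q) x₀)) (c ∘ orbitRows (c⁻¹ * f) ((c ^ q) x₀)))
      (cycEdges (orbitRows c x₀) (orbitRows c x₀) ∩
        cycEdges (orbitRows (c⁻¹ * f) ((c ^ q) x₀)) (c ∘ orbitRows (c⁻¹ * f) ((c ^ q) x₀))) := by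
  have hrange : Set.range (c ∘ arcPath c x₀ q (#c.support - q - 1)) =
      (c.support : Set (Fin k)) ∩ c '' (c⁻¹ * f).support := by
    rw [Set.range_comp, h.range_arcPath hc, Set.image_inter c.injective, Perm.image_support_self]
  rw [cycVerts_orbitRows_one hc h.mem_support_left,
    cycVerts_orbitRows c (h.isCycle_inv_mul hc hf) (Perm.mem_support_inv_mul_iff.mpr h.apply_ne),
    Set.image_inl_union_image_inr_inter, ← h.range_arcPath hc, ← hrange, ← pathVerts_eq,
    h.cycEdges_inter_cycEdges_inv_mul hc hf]
  have hu := arcPath_injective hc h.mem_support_left (q := q) (p := #c.support - q - 1)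
    (by have := h.lt_card hc; omega)
  exact .path hu (c.injective.comp hu)

lemma notMem_cycEdges (h : BranchesOnce c f x₀ q) (hc : c.IsCycle) :
    ((c ^ q) x₀, f ((c ^ q) x₀)) ∉ cycEdges (orbitRows c x₀) (orbitRows c x₀) := by
  rw [cycEdges_orbitRows_one hc h.mem_support_left]
  rintro ⟨-, h' | h'⟩
  exacts [Perm.mem_support.mp (h.mem_support_inter_iff.mpr ⟨q, le_rfl, rfl⟩).2 h', h.apply_ne h']

variable {M : Matrix (Fin k) (Fin k) ℝ}

lemma twoECycles_of_eCycle (h : BranchesOnce c f x₀ q) (hd : ∀ i, M i i ≠ 0) (hc : c.IsCycle)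
    (hcv : ∀ i, M i (c i) ≠ 0) (hce : termSign M c = -termSign M 1) (hf : f.IsCycle)
    (hfv : ∀ i, M i (f i) ≠ 0) (hfe : termSign M f = -termSign M 1) :
    TwoECyclesWithSRIntersection M := by
  refine ⟨_, orbitRows c x₀, orbitRows c x₀, _, orbitRows f x₀, orbitRows f x₀,
    isCyc_orbitRows_one hd hcv hc h.mem_support_left,
    parity_orbitRows_one_eq_one hd hc h.mem_support_left hce,
    isCyc_orbitRows_one hd hfv hf h.mem_support_right,
    parity_orbitRows_one_eq_one hd hf h.mem_support_right hfe,
    fun heq => h.notMem_cycEdges hc ?_, h.srIntersection_orbitRows hc hf⟩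
  rw [heq, cycEdges_orbitRows_one hf h.mem_support_right]
  exact ⟨(h.mem_support_inter_iff.mpr ⟨q, le_rfl, rfl⟩).2, Or.inr rfl⟩

/-- The matchings `c` and `f` differ along one SR cycle, made of the arc of `c` from `(c ^ q) x₀`
to `x₀` and the arc of `f` between the same points; as `f` is an o-cycle and `c` an e-cycle, it is
an e-cycle. -/
lemma twoECycles_of_oCycle (h : BranchesOnce c f x₀ q) (hd : ∀ i, M i i ≠ 0) (hc : c.IsCycle)
    (hcv : ∀ i, M i (c i) ≠ 0) (hce : termSign M c = -termSign M 1) (hf : f.IsCycle)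
    (hfv : ∀ i, M i (f i) ≠ 0) (hfo : termSign M f = termSign M 1) :
    TwoECyclesWithSRIntersection M := by
  have hπ := h.isCycle_inv_mul hc hf
  have hz : (c ^ q) x₀ ∈ (c⁻¹ * f).support := Perm.mem_support_inv_mul_iff.mpr h.apply_ne
  have hcf : ∀ y, c ((c⁻¹ * f) y) = f y := by simp
  have hpar : parity M (orbitRows (c⁻¹ * f) ((c ^ q) x₀)) (c ∘ orbitRows (c⁻¹ * f) ((c ^ q) x₀))
      = 1 := by
    have h' := termSign_mul_termSign_mul_eq_neg_parity M c hcv hπ hz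
    rw [mul_inv_cancel_left, hce, hfo, neg_mul, termSign_mul_self (σ := 1) hd] at h'
    linarith
  refine ⟨_, orbitRows c x₀, orbitRows c x₀, _, orbitRows (c⁻¹ * f) ((c ^ q) x₀),
    c ∘ orbitRows (c⁻¹ * f) ((c ^ q) x₀), isCyc_orbitRows_one hd hcv hc h.mem_support_left,
    parity_orbitRows_one_eq_one hd hc h.mem_support_left hce,
    isCyc_orbitRows M c hπ hz (fun y _ => hcv y) (fun y _ => hcf y ▸ hfv y), hpar,
    fun heq => h.notMem_cycEdges hc ?_, h.srIntersection_inv_mul hc hf⟩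
  rw [heq, cycEdges_orbitRows c hπ hz]
  exact ⟨hz, Or.inr (hcf _).symm⟩

end BranchesOnce

def hybridWalk (g c : Perm (Fin k)) (x : Fin k) (j t : ℕ) : Fin k :=
  if t < j then (g ^ t) x else (c ^ (t - j)) ((g ^ j) x)

section Hybrid

variable {g c : Perm (Fin k)} {x : Fin k} {j t : ℕ}

lemma hybridWalk_of_lt (ht : t < j) : hybridWalk g c x j t = (g ^ t) x := if_pos ht

lemma hybridWalk_of_le (ht : j ≤ t) : hybridWalk g c x j t = (c ^ (t - j)) ((g ^ j) x) :=
  if_neg (not_lt.mpr ht)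

lemma hybridWalk_succ_of_lt (ht : t < j) :
    hybridWalk g c x j (t + 1) = g (hybridWalk g c x j t) := by
  rw [hybridWalk_of_lt ht, ← Perm.pow_succ_apply]
  rcases (Nat.succ_le_of_lt ht).lt_or_eq with ht' | rfl
  · exact hybridWalk_of_lt ht'
  · rw [hybridWalk_of_le le_rfl, Nat.sub_self, pow_zero, Perm.one_apply]

lemma hybridWalk_succ_of_le (ht : j ≤ t) :
    hybridWalk g c x j (t + 1) = c (hybridWalk g c x j t) := by
  rw [hybridWalk_of_le ht, hybridWalk_of_le (by omega), ← Perm.pow_succ_apply, Nat.sub_add_comm ht]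

lemma hybridWalk_injOn (hc : c.IsCycle) (hg : g.IsCycle) (hxg : x ∈ g.support)
    (hjg : j ≤ #g.support) (hjc : ∀ a, 0 < a → a < j → (g ^ a) x ∉ c.support)
    (hyc : (g ^ j) x ∈ c.support) {i : ℕ} (hic : i < #c.support) (hi : (c ^ i) ((g ^ j) x) = x) :
    ∀ s < j + i, ∀ t < j + i, hybridWalk g c x j s = hybridWalk g c x j t → s = t := by
  have hcross : ∀ s < j, ∀ t, j ≤ t → t < j + i →
      hybridWalk g c x j s ≠ hybridWalk g c x j t := fun s hs t ht ht' heq => by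
    rw [hybridWalk_of_lt hs, hybridWalk_of_le ht] at heq
    rcases Nat.eq_zero_or_pos s with rfl | hs0
    · rw [pow_zero, Perm.one_apply] at heq
      have := hc.eq_of_pow_apply_eq hyc hic (by omega) (hi.trans heq)
      omega
    · exact hjc s hs0 hs (heq ▸ Perm.pow_apply_mem_support.mpr hyc)
  intro s hs t ht hst
  rcases lt_or_ge s j with hsj | hsj <;> rcases lt_or_ge t j with htj | htj
  · rw [hybridWalk_of_lt hsj, hybridWalk_of_lt htj] at hst
    exact hg.eq_of_pow_apply_eq hxg (by omega) (by omega) hst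
  · exact absurd hst (hcross s hsj t htj ht)
  · exact absurd hst.symm (hcross t htj s hsj hs)
  · rw [hybridWalk_of_le hsj, hybridWalk_of_le htj] at hst
    have := hc.eq_of_pow_apply_eq hyc (by omega) (by omega) hst
    omega

end Hybrid

/-- From `x`, follow `g` until its first return to the support of `c`, then follow `c` back to
`x`: the resulting cycle meets `c` in a single chain and branches off it along `g` at `x`. -/
lemma exists_branchesOnce {c g : Perm (Fin k)} (hc : c.IsCycle) (hg : g.IsCycle) {x : Fin k}
    (hxc : x ∈ c.support) (hxg : x ∈ g.support) (hne : g x ≠ c x) :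
    ∃ (f : Perm (Fin k)) (x₀ : Fin k) (q : ℕ),
      f.IsCycle ∧ (∀ y, f y = g y ∨ f y = c y ∨ f y = y) ∧ BranchesOnce c f x₀ q := by
  obtain ⟨j, hj0, hjg, hyc, hjc⟩ := hg.exists_first_return hxg hxc
  obtain ⟨i, hic, hi⟩ := hc.isCycleOn_support.exists_pow_eq hyc hxc
  have hw0 : hybridWalk g c x j 0 = x := by rw [hybridWalk_of_lt hj0, pow_zero, Perm.one_apply]
  have hlen : 2 ≤ j + i := by
    rcases Nat.eq_zero_or_pos i with rfl | hi0
    · rw [pow_zero, Perm.one_apply] at hi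
      have := Nat.le_of_dvd hj0 ((hg.isCycleOn_support.pow_apply_eq hxg).mp hi)
      have := hg.two_le_card_support
      omega
    · omega
  have hclosed : hybridWalk g c x j (j + i) = hybridWalk g c x j 0 := by
    rw [hybridWalk_of_le (by omega), Nat.add_sub_cancel_left, hi, hw0]
  obtain ⟨f, hf, hstep, hsupp⟩ := Perm.exists_isCycle_of_closed_walk hlen
    (hybridWalk_injOn hc hg hxg hjg hjc hyc hic hi) hclosed
  refine ⟨f, (g ^ j) x, i, hf, fun z => ?_, hyc, ?_, fun b hb => ?_, ?_, fun z hzc hzf => ?_⟩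
  · by_cases hz : z ∈ f.support
    · obtain ⟨t, ht, rfl⟩ := (hsupp z).mp hz
      rw [hstep t ht]
      rcases lt_or_ge t j with htj | htj
      exacts [Or.inl (hybridWalk_succ_of_lt htj), Or.inr (Or.inl (hybridWalk_succ_of_le htj))]
    · exact Or.inr (Or.inr (Perm.notMem_support.mp hz))
  · have hprev : f (hybridWalk g c x j (j - 1)) = (g ^ j) x := by
      rw [hstep _ (by omega), Nat.sub_add_cancel hj0, hybridWalk_of_le le_rfl, Nat.sub_self,
        pow_zero, Perm.one_apply]
    exact hprev ▸ Perm.apply_mem_support.mpr ((hsupp _).mpr ⟨j - 1, by omega, rfl⟩)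
  · have hb' : (c ^ b) ((g ^ j) x) = hybridWalk g c x j (j + b) := by
      rw [hybridWalk_of_le (by omega), Nat.add_sub_cancel_left]
    rw [hb', hstep _ (by omega), hybridWalk_succ_of_le (by omega)]
  · rw [hi, ← hw0, hstep 0 (by omega), hybridWalk_succ_of_lt hj0, hw0]
    exact hne
  · obtain ⟨t, ht, rfl⟩ := (hsupp z).mp hzf
    rcases lt_or_ge t j with htj | htj
    · obtain rfl : t = 0 := by
        by_contra ht0
        exact hjc t (Nat.pos_of_ne_zero ht0) htj (hybridWalk_of_lt htj ▸ hzc)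
      exact ⟨i, le_rfl, hw0.trans hi.symm⟩
    · exact ⟨t - j, by omega, hybridWalk_of_le htj⟩

variable {M : Matrix (Fin k) (Fin k) ℝ}

lemma not_branchesOnce (hM : ConditionStar M) (hd : ∀ i, M i i ≠ 0) {c f : Perm (Fin k)}
    (hc : c.IsCycle) (hcv : ∀ i, M i (c i) ≠ 0) (hce : termSign M c = -termSign M 1)
    (hf : f.IsCycle) (hfv : ∀ i, M i (f i) ≠ 0) {x₀ : Fin k} {q : ℕ} :
    ¬BranchesOnce c f x₀ q := fun h =>
  hM.2 <| (termSign_eq_or_eq_neg hd hfv).elim (h.twoECycles_of_oCycle hd hc hcv hce hf hfv)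
    (h.twoECycles_of_eCycle hd hc hcv hce hf hfv)

section ECycle

variable (hM : ConditionStar M) (hd : ∀ i, M i i ≠ 0) {c : Perm (Fin k)} (hc : c.IsCycle)
  (hcv : ∀ i, M i (c i) ≠ 0) (hce : termSign M c = -termSign M 1)
include hM hd hc hcv hce

lemma eq_of_not_disjoint_support {g : Perm (Fin k)} (hg : g.IsCycle) (hgv : ∀ i, M i (g i) ≠ 0)
    (hcg : ¬Disjoint c.support g.support) : g = c := by
  by_contra hne
  obtain ⟨x, hxc, hxg, hx⟩ : ∃ x ∈ c.support, x ∈ g.support ∧ g x ≠ c x := by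
    by_contra! h
    obtain ⟨x, hxc, hxg⟩ := Finset.not_disjoint_iff.mp hcg
    exact hne (hg.eq_on_support_inter_nonempty_congr hc
      (fun y hy => h y (mem_inter.mp hy).2 (mem_inter.mp hy).1) (h x hxc hxg) hxg)
  obtain ⟨f, x₀, q, hf, hfg, hbr⟩ := exists_branchesOnce hc hg hxc hxg hx
  refine not_branchesOnce hM hd hc hcv hce hf (fun i => ?_) hbr
  rcases hfg i with h | h | h <;> rw [h]
  exacts [hgv i, hcv i, hd i]

lemma disjoint_or_disjoint_mul_inv {σ : Perm (Fin k)} (hσ : ∀ i, M i (σ i) ≠ 0) :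
    σ.Disjoint c ∨ (σ * c⁻¹).Disjoint c := by
  by_cases h : ∀ y ∈ c.support, σ y = y
  · exact Or.inl fun y => (em (y ∈ c.support)).imp (h y) Perm.notMem_support.mp
  · obtain ⟨x, hxc, hσx⟩ : ∃ x ∈ c.support, σ x ≠ x := by simpa using h
    have hxg : x ∈ (σ.cycleOf x).support :=
      Perm.mem_support_cycleOf_iff.mpr ⟨.refl _ _, Perm.mem_support.mpr hσx⟩
    have hgv : ∀ i, M i (σ.cycleOf x i) ≠ 0 := fun i => by
      rw [Perm.cycleOf_apply]
      split_ifs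
      exacts [hσ i, hd i]
    have hgc := eq_of_not_disjoint_support hM hd hc hcv hce (σ.isCycle_cycleOf hσx) hgv
      (Finset.not_disjoint_iff.mpr ⟨x, hxc, hxg⟩)
    refine Or.inr fun y => ?_
    by_cases hy : y ∈ c.support
    · have hy' : c⁻¹ y ∈ (σ.cycleOf x).support := by
        rw [hgc, ← Perm.support_inv, Perm.apply_mem_support, Perm.support_inv]
        exact hy
      left
      rw [Perm.mul_apply, ← (Perm.mem_support_cycleOf_iff.mp hy').1.cycleOf_apply, hgc,
        Perm.coe_inv, Equiv.apply_symm_apply]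
    · exact Or.inr (Perm.notMem_support.mp hy)

lemma detTerm_eq_neg_detTerm_one : detTerm M c = -detTerm M 1 := by
  obtain ⟨x, hx⟩ := hc.nonempty_support
  have hs := (isSCyc_orbitRows_iff M 1 hc hx).mp
    (hM.1 _ _ _ (isCyc_orbitRows_one hd hcv hc hx) (parity_orbitRows_one_eq_one hd hc hx hce))
  simp only [Perm.one_apply] at hs
  have habs : |∏ i, M i (c i)| = |∏ i, M i ((1 : Perm (Fin k)) i)| := by
    simp only [Finset.abs_prod, Perm.one_apply]
    rw [← prod_mul_prod_compl c.support (fun i => |M i (c i)|),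
      ← prod_mul_prod_compl c.support (fun i => |M i i|), ← hs]
    congr 1
    exact prod_congr rfl fun i hi => by rw [Perm.notMem_support.mp (mem_compl.mp hi)]
  rw [detTerm_eq_termSign_mul_abs, detTerm_eq_termSign_mul_abs M 1, hce, habs, neg_mul]

lemma detTerm_mul_eq_neg {σ : Perm (Fin k)} (hσ : σ.Disjoint c) :
    detTerm M (σ * c) = -detTerm M σ := by
  have h1 : detTerm M 1 ≠ 0 := by
    rw [detTerm_one]
    exact prod_ne_zero_iff.mpr fun i _ => hd i
  have h := detTerm_mul_of_disjoint M hσ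
  rw [detTerm_eq_neg_detTerm_one hM hd hc hcv hce, mul_neg, ← neg_mul] at h
  exact mul_right_cancel₀ h1 h

/-- Right multiplication by `c` pairs off the nonzero terms of `M.det` with opposite values. -/
lemma det_eq_zero_of_eCycle : M.det = 0 := by
  classical
  set A := univ.filter fun σ : Perm (Fin k) => σ.Disjoint c
  have hdisj : Disjoint A (A.image (· * c)) := by
    rw [Finset.disjoint_left]
    intro σ hσA hσB
    obtain ⟨τ, hτA, rfl⟩ := mem_image.mp hσB
    obtain ⟨x, hx⟩ := hc.nonempty_support
    have hx' := Perm.mem_support.mp hx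
    have hτ : τ (c x) = c x :=
      ((mem_filter.mp hτA).2 (c x)).resolve_right fun h => hx' (c.injective h)
    rcases (mem_filter.mp hσA).2 x with h | h
    · exact hx' (by rwa [Perm.mul_apply, hτ] at h)
    · exact hx' h
  have hzero : ∀ σ ∈ univ, σ ∉ A ∪ A.image (· * c) → detTerm M σ = 0 := by
    intro σ _ hσ
    refine detTerm_eq_zero (not_forall_not.mp fun hσv => hσ ?_)
    rcases disjoint_or_disjoint_mul_inv hM hd hc hcv hce hσv with h | h
    · exact mem_union_left _ (mem_filter.mpr ⟨mem_univ _, h⟩)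
    · exact mem_union_right _
        (mem_image.mpr ⟨σ * c⁻¹, mem_filter.mpr ⟨mem_univ _, h⟩, inv_mul_cancel_right σ c⟩)
  rw [det_eq_sum_detTerm, ← sum_subset (subset_univ _) hzero, sum_union hdisj,
    sum_image fun σ _ τ _ h => mul_right_cancel h, ← sum_add_distrib]
  exact sum_eq_zero fun σ hσ => by
    rw [detTerm_mul_eq_neg hM hd hc hcv hce (mem_filter.mp hσ).2, add_neg_cancel]

end ECycle

section Nonsingular

lemma termSign_eq_termSign_one (hd : ∀ i, M i i ≠ 0)
    (hcyc : ∀ c : Perm (Fin k), c.IsCycle → (∀ i, M i (c i) ≠ 0) → termSign M c = termSign M 1)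
    (σ : Perm (Fin k)) (hσ : ∀ i, M i (σ i) ≠ 0) : termSign M σ = termSign M 1 := by
  induction σ using Perm.cycle_induction_on with
  | base_one => rfl
  | base_cycles σ hσc => exact hcyc σ hσc hσ
  | induction_disjoint σ τ hστ _ ihσ ihτ =>
    have hσv : ∀ i, M i (σ i) ≠ 0 := fun i => by
      rcases hστ i with h | h
      · rw [h]; exact hd i
      · simpa [h] using hσ i
    have hτv : ∀ i, M i (τ i) ≠ 0 := fun i => by
      rcases hστ i with h | h
      · simpa [hστ.commute.eq, h] using hσ i
      · rw [h]; exact hd i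
    have h : termSign M (σ * τ) * termSign M 1 = termSign M σ * termSign M τ :=
      detTerm_mul_of_disjoint (M.map Real.sign) hστ
    rw [ihσ hσv, ihτ hτv] at h
    exact mul_right_cancel₀ (termSign_ne_zero (σ := 1) hd) h

lemma det_eq_termSign_one_mul {B : Matrix (Fin k) (Fin k) ℝ} (hB : SameSignPattern B M)
    (h : ∀ σ : Perm (Fin k), (∀ i, M i (σ i) ≠ 0) → termSign M σ = termSign M 1) :
    B.det = termSign M 1 * ∑ σ : Perm (Fin k), |∏ i, B i (σ i)| := by
  rw [det_eq_sum_detTerm, mul_sum]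
  refine sum_congr rfl fun σ _ => ?_
  rw [detTerm_eq_termSign_mul_abs, termSign_eq_of_sameSignPattern hB]
  by_cases hσ : ∀ i, M i (σ i) ≠ 0
  · rw [h σ hσ]
  · obtain ⟨i, hi⟩ : ∃ i, M i (σ i) = 0 := by simpa using hσ
    rw [prod_eq_zero (f := fun j => B j (σ j)) (mem_univ i) ((hB.eq_zero_iff _ _).mpr hi),
      abs_zero, mul_zero, mul_zero]

lemma signNonsingular_of_termSign_eq (hd : ∀ i, M i i ≠ 0)
    (h : ∀ σ : Perm (Fin k), (∀ i, M i (σ i) ≠ 0) → termSign M σ = termSign M 1) :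
    SignNonsingular M := by
  intro B hB
  rw [det_eq_termSign_one_mul hB h]
  refine mul_ne_zero (termSign_ne_zero (σ := 1) hd) (ne_of_gt ?_)
  refine sum_pos' (fun σ _ => abs_nonneg _) ⟨1, mem_univ _, abs_pos.mpr ?_⟩
  exact prod_ne_zero_iff.mpr fun i _ => (hB.eq_zero_iff _ _).not.mpr (hd i)

end Nonsingular

theorem signNonsingular_or_det_eq_zero_of_diag (hM : ConditionStar M) (hd : ∀ i, M i i ≠ 0) :
    SignNonsingular M ∨ M.det = 0 := by
  by_cases he : ∃ c : Perm (Fin k), c.IsCycle ∧ (∀ i, M i (c i) ≠ 0) ∧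
      termSign M c = -termSign M 1
  · obtain ⟨c, hc, hcv, hce⟩ := he
    exact Or.inr (det_eq_zero_of_eCycle hM hd hc hcv hce)
  · refine Or.inl (signNonsingular_of_termSign_eq hd (termSign_eq_termSign_one hd ?_))
    exact fun c hc hcv =>
      (termSign_eq_or_eq_neg hd hcv).resolve_right fun hce => he ⟨c, hc, hcv, hce⟩

theorem signNonsingular_or_det_eq_zero (hM : ConditionStar M) : SignNonsingular M ∨ M.det = 0 := by
  by_cases hσ : ∃ σ : Perm (Fin k), ∀ i, M i (σ i) ≠ 0
  · obtain ⟨σ, hσ⟩ := hσ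
    rcases signNonsingular_or_det_eq_zero_of_diag (hM.submatrix injective_id σ.injective) hσ
      with hS | hdet
    · refine Or.inl fun B hB hB0 => hS (B.submatrix id σ) (fun i j => hB i (σ j)) ?_
      rw [Matrix.det_permute', hB0, mul_zero]
    · rw [Matrix.det_permute'] at hdet
      exact Or.inr ((mul_eq_zero.mp hdet).resolve_left (by simp))
  · refine Or.inr ((det_eq_sum_detTerm M).trans (sum_eq_zero fun σ _ => detTerm_eq_zero ?_))
    simpa using not_exists.mp hσ σ

end SRGraph

open SRGraph in
/-- If the SR graph of `S` satisfies Condition (*) — every e-cycle is an s-cycle and no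
two e-cycles with distinct edge sets have S-to-R intersection — then `S` is SSD: every
square submatrix of `S` is sign nonsingular or has determinant zero. -/
theorem conditionStar_implies_SSD {n m : ℕ} (S : Matrix (Fin n) (Fin m) ℝ)
    (h : ConditionStar S) : SSD S :=
  fun _ _ _ hρ hc => signNonsingular_or_det_eq_zero (h.submatrix hρ hc)
end

section
/- Let A be an n×n real matrix and let α ≠ β be permutations of Fin n such that ∏_i A i (α i) ≠ 0 and ∏_i A i (β i) ≠ 0. Then for every cycle c appearing in the disjoint-cycle decomposition of π = α⁻¹ ∘ β, with support s of cardinality r (necessarily r ≥ 2), there is an enumeration a : Fin r → Fin n of s such that, setting b j = α (a j), both a and b are injective and β (a j) = b (j+1) for all j (indices mod r); consequently (r, a, b) is a cycle of the SR graph G(A). In particular G(A) contains at least one cycle. -/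
open SRGraph in
/-- If `α ≠ β` are permutations whose determinant term subgraphs in `A` consist of nonzero
entries, then every cycle `c` in the disjoint-cycle decomposition of `π = α⁻¹ ∘ β`, with
support of cardinality `r` (necessarily `r ≥ 2`), gives rise to an enumeration
`a : Fin r → Fin n` of the support with `b j = α (a j)` injective and `β (a j) = b (j+1)`
(indices mod `r`), so that `(r, a, b)` is a cycle of the SR graph `G(A)`.
In particular `G(A)` contains at least one cycle. -/
theorem cycles_of_perm_give_SR_cycles {n : ℕ} (A : Matrix (Fin n) (Fin n) ℝ)
    (α β : Equiv.Perm (Fin n)) (hne : α ≠ β)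
    (hα : (∏ i, A i (α i)) ≠ 0) (hβ : (∏ i, A i (β i)) ≠ 0) :
    (∀ c ∈ (α⁻¹ * β).cycleFactorsFinset,
      2 ≤ c.support.card ∧
      ∃ a : Fin c.support.card → Fin n,
        Function.Injective a ∧ Set.range a = (c.support : Set (Fin n)) ∧
        (∀ j, β (a j) = α (a (finRotate c.support.card j))) ∧
        IsCyc A a (fun j => α (a j))) ∧
    ∃ (r : ℕ) (a : Fin r → Fin n) (b : Fin r → Fin n), IsCyc A a b := by
  have hA : ∀ i, A i (α i) ≠ 0 := fun i => Finset.prod_ne_zero_iff.mp hα i (Finset.mem_univ i)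
  have hB : ∀ i, A i (β i) ≠ 0 := fun i => Finset.prod_ne_zero_iff.mp hβ i (Finset.mem_univ i)
  have hval : ∀ (k : ℕ), 2 ≤ k → ∀ j : Fin k, ((finRotate k j : Fin k) : ℕ) = ((j : ℕ) + 1) % k := by
    intro k hk j
    match k, hk, j with
    | (k + 1), hk, j =>
      rw [finRotate_succ_apply, Fin.val_add, Fin.val_one']
      have h1 : 1 % (k + 1) = 1 := Nat.mod_eq_of_lt (by omega)
      rw [h1]
  have main : ∀ c ∈ (α⁻¹ * β).cycleFactorsFinset,
      2 ≤ c.support.card ∧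
      ∃ a : Fin c.support.card → Fin n,
        Function.Injective a ∧ Set.range a = (c.support : Set (Fin n)) ∧
        (∀ j, β (a j) = α (a (finRotate c.support.card j))) ∧
        IsCyc A a (fun j => α (a j)) := by
    intro c hc
    obtain ⟨hcyc, hsupp⟩ := (Equiv.Perm.mem_cycleFactorsFinset_iff).mp hc
    have h2 : 2 ≤ c.support.card := hcyc.two_le_card_support
    set r := c.support.card with hrdef
    have hord : orderOf c = r := hcyc.orderOf
    clear_value r
    haveI : NeZero r := ⟨by omega⟩
    obtain ⟨x, hx⟩ : ∃ x, x ∈ c.support := Finset.card_pos.mp (by omega)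
    have hxc : c x ≠ x := Equiv.Perm.mem_support.mp hx
    set a : Fin r → Fin n := fun j => (c ^ (j : ℕ)) x with ha
    have key : ∀ k : ℕ, (c ^ k) x = x → r ∣ k := by
      intro k hk
      have h1 : c ^ k = 1 := hcyc.pow_eq_one_iff.mpr ⟨x, hxc, hk⟩
      exact hord ▸ orderOf_dvd_of_pow_eq_one h1
    have hinj : Function.Injective a := by
      have aux : ∀ i j : Fin r, (i : ℕ) ≤ (j : ℕ) → a i = a j → i = j := by
        intro i j hij h
        simp only [ha] at h
        have h1 : (c ^ ((j : ℕ) - (i : ℕ))) x = x := by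
          apply (c ^ (i : ℕ)).injective
          have h2 : (c ^ (i : ℕ)) ((c ^ ((j : ℕ) - (i : ℕ))) x) = (c ^ (j : ℕ)) x := by
            rw [← Equiv.Perm.mul_apply, ← pow_add, Nat.add_sub_cancel' hij]
          rw [h2]
          exact h.symm
        have hd := key _ h1
        have hj := j.isLt
        have h0 : (j : ℕ) - (i : ℕ) = 0 := Nat.eq_zero_of_dvd_of_lt hd (by omega)
        exact Fin.ext (by omega)
      intro i j h
      rcases le_total (i : ℕ) (j : ℕ) with hle | hle
      · exact aux i j hle h
      · exact (aux j i hle h.symm).symm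
    have hmem : ∀ j : Fin r, a j ∈ c.support := by
      intro j
      simpa [ha, Equiv.Perm.pow_apply_mem_support] using hx
    have hrange : Set.range a = (c.support : Set (Fin n)) := by
      ext y
      constructor
      · rintro ⟨j, rfl⟩; exact hmem j
      · intro hy
        obtain ⟨i, hi⟩ := hcyc.exists_pow_eq hxc (Equiv.Perm.mem_support.mp hy)
        refine ⟨⟨i % r, Nat.mod_lt _ (by omega)⟩, ?_⟩
        show (c ^ (i % r)) x = y
        rw [← hord, pow_mod_orderOf, hi]
    have hstep : ∀ j : Fin r, a (finRotate r j) = c (a j) := by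
      intro j
      show (c ^ (((finRotate r j : Fin r)) : ℕ)) x = c ((c ^ (j : ℕ)) x)
      have hp := pow_mod_orderOf c ((j : ℕ) + 1)
      rw [hord] at hp
      rw [hval r h2 j, hp, pow_succ', Equiv.Perm.mul_apply]
    have hbeta : ∀ j : Fin r, β (a j) = α (a (finRotate r j)) := by
      intro j
      rw [hstep j, hsupp _ (hmem j)]
      simp [Equiv.Perm.mul_apply]
    refine ⟨h2, a, hinj, hrange, hbeta, h2, hinj, α.injective.comp hinj,
      fun j => hA (a j), fun j => ?_⟩
    show A (a j) (α (a (finRotate r j))) ≠ 0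
    rw [← hbeta j]
    exact hB (a j)
  refine ⟨main, ?_⟩
  have hne1 : α⁻¹ * β ≠ 1 := fun h => hne (inv_mul_eq_one.mp h)
  have hNon : (α⁻¹ * β).cycleFactorsFinset.Nonempty := by
    rw [Finset.nonempty_iff_ne_empty]
    intro h
    exact hne1 (Equiv.Perm.cycleFactorsFinset_eq_empty_iff.mp h)
  obtain ⟨c, hc⟩ := hNon
  obtain ⟨_, a, _, _, _, hcyc⟩ := main c hc
  exact ⟨c.support.card, a, fun j => α (a j), hcyc⟩
end

section
/- Let A be an n×n real matrix and let α, β be permutations of Fin n such that the determinant terms T_α = sgn(α) · ∏_i A i (α i) and T_β = sgn(β) · ∏_i A i (β i) are both nonzero. Let N be the number of cycles c in the disjoint-cycle decomposition of π = α⁻¹ ∘ β for which (-1)^{|supp c|} · ∏_{i ∈ supp c} sign(A i (α i) · A i (β i)) = 1 (i.e., the number of e-cycles in the union of the two term subgraphs). Then sign(T_α · T_β) = (-1)^N. -/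
/-!
Write `π = α⁻¹ * β`. Pulling signs through the products, `sign (T_α T_β)` equals
`sgn π · ∏ᵢ sign (A i (α i) · A i (β i))`. Off the support of `π` we have `α i = β i`, so the
factor there is the sign of a nonzero square, namely `1`; on the support, the product splits over
the cycles of `π`. Since a cycle `c` has signature `-(-1)^|supp c|`, the whole expression becomes
`∏_c -w c` with `w c = (-1)^|supp c| · ∏_{i ∈ supp c} sign (A i (α i) · A i (β i)) = ±1`, and each
factor `-w c` is `-1` exactly when `c` is an e-cycle.
-/

open Finset Equiv

namespace Real

theorem sign_eq_coe_sign (r : ℝ) : Real.sign r = (SignType.sign r : ℝ) := by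
  rcases lt_trichotomy r 0 with hr | rfl | hr
  · simp [sign_of_neg hr, _root_.sign_neg hr]
  · simp
  · simp [sign_of_pos hr, _root_.sign_pos hr]

theorem sign_mul (x y : ℝ) : Real.sign (x * y) = Real.sign x * Real.sign y := by
  simp only [sign_eq_coe_sign, _root_.sign_mul, SignType.coe_mul]

theorem sign_pow (x : ℝ) (k : ℕ) : Real.sign (x ^ k) = Real.sign x ^ k := by
  simp only [sign_eq_coe_sign, _root_.sign_pow, SignType.coe_pow]

theorem sign_prod {ι : Type*} (s : Finset ι) (f : ι → ℝ) :
    Real.sign (∏ i ∈ s, f i) = ∏ i ∈ s, Real.sign (f i) := by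
  simp only [sign_eq_coe_sign]
  exact map_prod (SignType.castHom.comp signHom) f s

theorem sign_units_intCast (u : ℤˣ) : Real.sign ((u : ℤ) : ℝ) = ((u : ℤ) : ℝ) := by
  rcases Int.units_eq_one_or u with rfl | rfl <;> simp [sign_neg]

theorem neg_one_pow_mul_prod_sign {ι : Type*} (k : ℕ) (s : Finset ι) (f : ι → ℝ) :
    (-1) ^ k * ∏ i ∈ s, Real.sign (f i) = Real.sign ((-1) ^ k * ∏ i ∈ s, f i) := by
  rw [sign_mul, sign_pow, sign_neg, sign_one, sign_prod]

end Real

theorem Finset.prod_neg_eq_neg_one_pow_card_filter {ι R : Type*} [CommRing R] {s : Finset ι}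
    {f : ι → R} [DecidablePred (f · = 1)] (hf : ∀ i ∈ s, f i = 1 ∨ f i = -1) :
    ∏ i ∈ s, -f i = (-1) ^ #{i ∈ s | f i = 1} := by
  calc ∏ i ∈ s, -f i = ∏ i ∈ s, if f i = 1 then (-1 : R) else 1 := by
        refine prod_congr rfl fun i hi => ?_
        split_ifs with h
        · rw [h]
        · rw [(hf i hi).resolve_left h, neg_neg]
    _ = (-1) ^ #{i ∈ s | f i = 1} := by rw [prod_ite, prod_const, prod_const_one, mul_one]

namespace Equiv.Perm

variable {α : Type*} [DecidableEq α] [Fintype α]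

theorem sign_eq_prod_cycleFactorsFinset (σ : Perm α) :
    sign σ = ∏ c ∈ σ.cycleFactorsFinset, -(-1) ^ #c.support := by
  rw [sign_of_cycleType', cycleType_def, Multiset.map_map]
  rfl

theorem prod_eq_prod_cycleFactorsFinset_prod_support {M : Type*} [CommMonoid M] (σ : Perm α)
    {f : α → M} (hf : ∀ i ∉ σ.support, f i = 1) :
    ∏ i, f i = ∏ c ∈ σ.cycleFactorsFinset, ∏ i ∈ c.support, f i := by
  have hdisj : (σ.cycleFactorsFinset : Set (Perm α)).PairwiseDisjoint support :=
    fun c hc d hd hcd => (cycleFactorsFinset_pairwise_disjoint σ hc hd hcd).disjoint_support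
  have hsupp : σ.cycleFactorsFinset.biUnion support = σ.support := by
    ext i
    rw [mem_biUnion, mem_support_iff_mem_support_of_mem_cycleFactorsFinset]
  rw [← prod_subset (subset_univ _) fun i _ hi => hf i hi, ← hsupp, prod_biUnion hdisj]

theorem apply_eq_of_notMem_support_inv_mul {σ τ : Perm α} {i : α}
    (hi : i ∉ (σ⁻¹ * τ).support) : τ i = σ i :=
  inv_eq_iff_eq.mp (notMem_support.mp hi)

end Equiv.Perm

theorem Matrix.sign_detTerm_mul_detTerm {ι : Type*} [Fintype ι] [DecidableEq ι]
    (A : Matrix ι ι ℝ) (α β : Perm ι) :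
    Real.sign ((((Perm.sign α : ℤ) : ℝ) * ∏ i, A i (α i)) *
        (((Perm.sign β : ℤ) : ℝ) * ∏ i, A i (β i))) =
      ((Perm.sign (α⁻¹ * β) : ℤ) : ℝ) * ∏ i, Real.sign (A i (α i) * A i (β i)) := by
  have h : (((Perm.sign α : ℤ) : ℝ) * ∏ i, A i (α i)) * (((Perm.sign β : ℤ) : ℝ) * ∏ i, A i (β i))
      = ((Perm.sign (α⁻¹ * β) : ℤ) : ℝ) * ∏ i, A i (α i) * A i (β i) := by
    rw [prod_mul_distrib, map_mul, map_inv, Int.units_inv_eq_self]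
    push_cast
    ring
  rw [h, Real.sign_mul, Real.sign_units_intCast, Real.sign_prod]

open Classical in
/-- For an `n×n` real matrix `A` and permutations `α, β` with nonzero determinant terms
`T_α = sgn(α)·∏ A i (α i)` and `T_β = sgn(β)·∏ A i (β i)`, the sign of `T_α · T_β` is
`(-1)^N`, where `N` is the number of cycles `c` in the disjoint-cycle decomposition of
`π = α⁻¹ ∘ β` satisfying `(-1)^{|supp c|} · ∏_{i ∈ supp c} sign(A i (α i) · A i (β i)) = 1`
(i.e. the number of e-cycles in the union of the two term subgraphs). -/
theorem sign_of_term_product {n : ℕ} (A : Matrix (Fin n) (Fin n) ℝ)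
    (α β : Equiv.Perm (Fin n))
    (hα : ((Equiv.Perm.sign α : ℤ) : ℝ) * ∏ i, A i (α i) ≠ 0)
    (hβ : ((Equiv.Perm.sign β : ℤ) : ℝ) * ∏ i, A i (β i) ≠ 0)
    (N : ℕ)
    (hN : N = ((α⁻¹ * β).cycleFactorsFinset.filter (fun c =>
      (-1 : ℝ) ^ c.support.card *
        ∏ i ∈ c.support, Real.sign (A i (α i) * A i (β i)) = 1)).card) :
    Real.sign ((((Equiv.Perm.sign α : ℤ) : ℝ) * ∏ i, A i (α i)) *
        (((Equiv.Perm.sign β : ℤ) : ℝ) * ∏ i, A i (β i))) = (-1 : ℝ) ^ N := by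
  have hAα : ∀ i, A i (α i) ≠ 0 := fun i =>
    prod_ne_zero_iff.mp (right_ne_zero_of_mul hα) i (mem_univ i)
  have hAβ : ∀ i, A i (β i) ≠ 0 := fun i =>
    prod_ne_zero_iff.mp (right_ne_zero_of_mul hβ) i (mem_univ i)
  have h_fixed : ∀ i ∉ (α⁻¹ * β).support, Real.sign (A i (α i) * A i (β i)) = 1 := by
    intro i hi
    rw [Perm.apply_eq_of_notMem_support_inv_mul hi]
    exact Real.sign_of_pos (mul_self_pos.mpr (hAα i))
  have h_cycle : ∀ c ∈ (α⁻¹ * β).cycleFactorsFinset,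
      (-1 : ℝ) ^ #c.support * ∏ i ∈ c.support, Real.sign (A i (α i) * A i (β i)) = 1 ∨
      (-1 : ℝ) ^ #c.support * ∏ i ∈ c.support, Real.sign (A i (α i) * A i (β i)) = -1 := by
    intro c _
    rw [Real.neg_one_pow_mul_prod_sign]
    refine (Real.sign_apply_eq_of_ne_zero _ (mul_ne_zero (by simp) ?_)).symm
    exact prod_ne_zero_iff.mpr fun i _ => mul_ne_zero (hAα i) (hAβ i)
  rw [hN, Matrix.sign_detTerm_mul_detTerm, Perm.sign_eq_prod_cycleFactorsFinset,
    Perm.prod_eq_prod_cycleFactorsFinset_prod_support _ h_fixed]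
  push_cast
  rw [← prod_mul_distrib]
  simp_rw [neg_mul]
  exact prod_neg_eq_neg_one_pow_card_filter h_cycle
end

section
/- Let A be an n×n real matrix and let α, β be permutations of Fin n such that the determinant terms T_α = sgn(α) · ∏_i A i (α i) and T_β = sgn(β) · ∏_i A i (β i) are both nonzero. If every cycle c in the disjoint-cycle decomposition of π = α⁻¹ ∘ β satisfies (-1)^{|supp c|} · ∏_{i ∈ supp c} sign(A i (α i) · A i (β i)) = -1 (i.e., all cycles in the union of the two term subgraphs are o-cycles), then T_α and T_β have the same sign: T_α · T_β > 0. -/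
private lemma real_sign_mul' (x y : ℝ) : Real.sign (x * y) = Real.sign x * Real.sign y := by
  rcases lt_trichotomy x 0 with hx | hx | hx <;>
    rcases lt_trichotomy y 0 with hy | hy | hy <;>
    simp [hx, hy, Real.sign_of_neg, Real.sign_of_pos, Real.sign_zero,
      mul_pos_of_neg_of_neg, mul_neg_of_neg_of_pos, mul_neg_of_pos_of_neg, mul_pos]

private noncomputable def realSignHom : ℝ →* ℝ where
  toFun := Real.sign
  map_one' := Real.sign_one
  map_mul' := real_sign_mul'

private lemma real_sign_prod {ι : Type*} (s : Finset ι) (f : ι → ℝ) :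
    Real.sign (∏ i ∈ s, f i) = ∏ i ∈ s, Real.sign (f i) :=
  map_prod realSignHom f s

private lemma pos_of_sign_eq_one {x : ℝ} (h : Real.sign x = 1) : 0 < x := by
  rcases lt_trichotomy x 0 with hx | hx | hx
  · rw [Real.sign_of_neg hx] at h; norm_num at h
  · rw [hx, Real.sign_zero] at h; norm_num at h
  · exact hx

/-- For an `n×n` real matrix `A` and permutations `α, β` with nonzero determinant terms
`T_α = sgn(α)·∏ A i (α i)` and `T_β = sgn(β)·∏ A i (β i)`: if every cycle `c` in the
disjoint-cycle decomposition of `π = α⁻¹ ∘ β` satisfies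
`(-1)^{|supp c|} · ∏_{i ∈ supp c} sign(A i (α i) · A i (β i)) = -1` (all cycles in the
union of the two term subgraphs are o-cycles), then `T_α` and `T_β` have the same sign,
i.e. `T_α · T_β > 0`. -/
theorem terms_same_sign_of_all_o_cycles {n : ℕ} (A : Matrix (Fin n) (Fin n) ℝ)
    (α β : Equiv.Perm (Fin n))
    (hα : ((Equiv.Perm.sign α : ℤ) : ℝ) * ∏ i, A i (α i) ≠ 0)
    (hβ : ((Equiv.Perm.sign β : ℤ) : ℝ) * ∏ i, A i (β i) ≠ 0)
    (h : ∀ c ∈ (α⁻¹ * β).cycleFactorsFinset,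
      (-1 : ℝ) ^ c.support.card *
        ∏ i ∈ c.support, Real.sign (A i (α i) * A i (β i)) = -1) :
    0 < (((Equiv.Perm.sign α : ℤ) : ℝ) * ∏ i, A i (α i)) *
        (((Equiv.Perm.sign β : ℤ) : ℝ) * ∏ i, A i (β i)) := by
  classical
  set π := α⁻¹ * β with hπ
  have hαne : ∀ i, A i (α i) ≠ 0 := by
    intro i hi
    exact hα (by rw [Finset.prod_eq_zero (Finset.mem_univ i) hi, mul_zero])
  apply pos_of_sign_eq_one
  have key : (((Equiv.Perm.sign α : ℤ) : ℝ) * ∏ i, A i (α i)) *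
        (((Equiv.Perm.sign β : ℤ) : ℝ) * ∏ i, A i (β i)) =
      ((Equiv.Perm.sign π : ℤ) : ℝ) * ∏ i, (A i (α i) * A i (β i)) := by
    have hsπ : (Equiv.Perm.sign π : ℤ) = (Equiv.Perm.sign α : ℤ) * (Equiv.Perm.sign β : ℤ) := by
      rw [hπ, map_mul, map_inv]
      push_cast
      simp
    rw [hsπ, Finset.prod_mul_distrib]
    push_cast
    ring
  rw [key, real_sign_mul', real_sign_prod]
  have hsign1 : Real.sign ((Equiv.Perm.sign π : ℤ) : ℝ) = ((Equiv.Perm.sign π : ℤ) : ℝ) := by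
    rcases Int.units_eq_one_or (Equiv.Perm.sign π) with hs | hs <;> rw [hs]
    · norm_num
    · push_cast
      exact Real.sign_of_neg (by norm_num)
  rw [hsign1]
  -- split the product over the support of π
  rw [← Finset.prod_sdiff (Finset.subset_univ π.support)]
  have h1 : ∏ i ∈ Finset.univ \ π.support, Real.sign (A i (α i) * A i (β i)) = 1 := by
    apply Finset.prod_eq_one
    intro i hi
    rw [Finset.mem_sdiff] at hi
    have hiα : α i = β i := by
      have := hi.2
      rw [Equiv.Perm.notMem_support, hπ] at this
      have := congrArg α this
      simpa using this.symm
    rw [← hiα]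
    exact Real.sign_of_pos (mul_self_pos.mpr (hαne i))
  rw [h1, one_mul]
  -- support of π is the disjoint union of the supports of its cycle factors
  have hsupport : π.support = π.cycleFactorsFinset.biUnion (fun c => c.support) := by
    conv_lhs => rw [← Equiv.Perm.cycleFactorsFinset_noncommProd π]
    exact Equiv.Perm.support_noncommProd π.cycleFactorsFinset_pairwise_disjoint
  have hdisj : (↑π.cycleFactorsFinset : Set (Equiv.Perm (Fin n))).PairwiseDisjoint
      (fun c => c.support) := fun c hc d hd hcd =>
    (π.cycleFactorsFinset_pairwise_disjoint hc hd hcd).disjoint_support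
  rw [hsupport, Finset.prod_biUnion hdisj]
  -- sign of π is the product of signs of its cycle factors
  have hsgn : (Equiv.Perm.sign π : ℤ) = ∏ c ∈ π.cycleFactorsFinset, (Equiv.Perm.sign c : ℤ) := by
    conv_lhs => rw [← Equiv.Perm.cycleFactorsFinset_noncommProd π]
    rw [Finset.map_noncommProd, Finset.noncommProd_eq_prod]
    push_cast
    rfl
  rw [hsgn]
  push_cast
  rw [← Finset.prod_mul_distrib]
  apply Finset.prod_eq_one
  intro c hc
  have hcyc : c.IsCycle := (Equiv.Perm.mem_cycleFactorsFinset_iff.mp hc).1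
  have hs : (Equiv.Perm.sign c : ℤ) = -(-1) ^ c.support.card := by
    rw [hcyc.sign]; push_cast; ring
  rw [hs]
  push_cast
  rw [neg_mul, h c hc, neg_neg]
end

section
/- Let A be an n×n real matrix with det A ≠ 0, and let α, β be permutations of Fin n such that T_α = sgn(α) · ∏_i A i (α i) and T_β = sgn(β) · ∏_i A i (β i) are both nonzero. Suppose that π = α⁻¹ ∘ β is a single cycle with support s and that the corresponding SR-graph cycle is both an e-cycle ((-1)^{|s|} · ∏_{i∈s} sign(A i (α i) · A i (β i)) = 1) and an s-cycle (∏_{i∈s} |A i (α i)| = ∏_{i∈s} |A i (β i)|). Then there exists a permutation σ of Fin n with ∏_i A i (σ i) ≠ 0 such that σ i ≠ α i for some i ∈ s, and σ i ≠ β i for some i ∈ s (i.e., the term subgraph of σ contains neither half of the disconnecting partition of the cycle). -/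
/-!
Suppose every permutation `σ` with a nonzero diagonal product agrees on the support `s` of the
cycle `π = α⁻¹ * β` with `α` or with `β`. Then `det A` is the sum of the terms of these two
families, and `σ ↦ σ * π` maps the first family bijectively onto the second. The s-cycle and
e-cycle conditions together give `∏_{i ∈ s} A i (β i) = (-1)^|s| ∏_{i ∈ s} A i (α i)`, while
`sign π = -(-1)^|s|`; so the term of `σ * π` is minus that of `σ`, and `det A = 0`.
-/

open Finset Equiv

namespace Real

theorem eq_sign_mul_mul_of_abs_eq {x y : ℝ} (h : |x| = |y|) : y = Real.sign (x * y) * x := by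
  rcases eq_or_ne x 0 with rfl | hx
  · simpa using h.symm
  rcases abs_eq_abs.mp h with rfl | rfl
  · rw [sign_of_pos (mul_self_pos.mpr hx), one_mul]
  · rw [neg_mul, sign_neg, sign_of_pos (mul_self_pos.mpr (neg_ne_zero.mp hx))]
    ring

end Real

theorem Finset.prod_univ_eq_prod_mul_prod_compl_of_eqOn {ι M : Type*} [Fintype ι]
    [DecidableEq ι] [CommMonoid M] {f g h : ι → M} {s : Finset ι}
    (hs : ∀ i ∈ s, f i = g i) (hsc : ∀ i ∉ s, f i = h i) :
    ∏ i, f i = (∏ i ∈ s, g i) * ∏ i ∈ sᶜ, h i := by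
  rw [← prod_mul_prod_compl s f, prod_congr rfl hs,
    prod_congr rfl fun i hi => hsc i (mem_compl.mp hi)]

theorem Equiv.Perm.forall_mem_support_apply_iff {ι : Type*} [Fintype ι] [DecidableEq ι]
    (π : Perm ι) {p : ι → Prop} : (∀ i ∈ π.support, p (π i)) ↔ ∀ i ∈ π.support, p i := by
  refine ⟨fun h i hi => ?_, fun h i hi => h _ (π.apply_mem_support.mpr hi)⟩
  simpa using h (π⁻¹ i) (by rwa [← π.support_inv, π⁻¹.apply_mem_support, π.support_inv])

namespace Matrix

variable {ι R : Type*} [Fintype ι] [DecidableEq ι] [CommRing R] {α β : Perm ι}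

def detTerm (A : Matrix ι ι R) (σ : Perm ι) : R :=
  (Perm.sign σ : R) * ∏ i, A i (σ i)

theorem det_eq_sum_detTerm (A : Matrix ι ι R) : A.det = ∑ σ, A.detTerm σ := by
  rw [← det_transpose, det_apply']
  rfl

theorem detTerm_eq_zero {A : Matrix ι ι R} {σ : Perm ι} (h : ∏ i, A i (σ i) = 0) :
    A.detTerm σ = 0 := by
  rw [detTerm, h, mul_zero]

theorem mul_apply_eq_iff_of_inv_mul (σ : Perm ι) :
    (∀ i ∈ (α⁻¹ * β).support, (σ * (α⁻¹ * β)) i = β i) ↔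
      ∀ i ∈ (α⁻¹ * β).support, σ i = α i := by
  have hβ (i : ι) : (σ * (α⁻¹ * β)) i = β i ↔ σ ((α⁻¹ * β) i) = α ((α⁻¹ * β) i) := by
    simp
  simp only [hβ]
  exact (α⁻¹ * β).forall_mem_support_apply_iff (p := fun j => σ j = α j)

theorem detTerm_mul_inv_mul_eq_neg {A : Matrix ι ι R}
    (hcancel : (Perm.sign (α⁻¹ * β) : R) * ∏ i ∈ (α⁻¹ * β).support, A i (β i) =
      -∏ i ∈ (α⁻¹ * β).support, A i (α i))
    {σ : Perm ι} (hσ : ∀ i ∈ (α⁻¹ * β).support, σ i = α i) :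
    A.detTerm (σ * (α⁻¹ * β)) = -A.detTerm σ := by
  set π := α⁻¹ * β
  set s := π.support
  have hπσ : ∏ i, A i ((σ * π) i) = (∏ i ∈ s, A i (β i)) * ∏ i ∈ sᶜ, A i (σ i) :=
    prod_univ_eq_prod_mul_prod_compl_of_eqOn
      (fun i hi => by rw [(mul_apply_eq_iff_of_inv_mul σ).mpr hσ i hi])
      (fun i hi => by rw [Perm.mul_apply, Perm.notMem_support.mp hi])
  have hσ' : ∏ i, A i (σ i) = (∏ i ∈ s, A i (α i)) * ∏ i ∈ sᶜ, A i (σ i) :=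
    prod_univ_eq_prod_mul_prod_compl_of_eqOn (fun i hi => by rw [hσ i hi]) fun _ _ => rfl
  calc A.detTerm (σ * π)
      = Perm.sign σ * ((Perm.sign π : R) * ∏ i ∈ s, A i (β i)) * ∏ i ∈ sᶜ, A i (σ i) := by
        rw [detTerm, hπσ, Perm.sign_mul]
        push_cast
        ring
    _ = -A.detTerm σ := by
        rw [hcancel, detTerm, hσ']
        ring

theorem det_eq_zero_of_forall_eqOn_or_eqOn {A : Matrix ι ι R} (hne : α ≠ β)
    (hcancel : (Perm.sign (α⁻¹ * β) : R) * ∏ i ∈ (α⁻¹ * β).support, A i (β i) =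
      -∏ i ∈ (α⁻¹ * β).support, A i (α i))
    (h : ∀ σ : Perm ι, ∏ i, A i (σ i) ≠ 0 →
      (∀ i ∈ (α⁻¹ * β).support, σ i = α i) ∨ ∀ i ∈ (α⁻¹ * β).support, σ i = β i) :
    A.det = 0 := by
  set π := α⁻¹ * β
  set s := π.support
  let Sα := univ.filter fun σ : Perm ι => ∀ i ∈ s, σ i = α i
  let Sβ := univ.filter fun σ : Perm ι => ∀ i ∈ s, σ i = β i
  have hdisj : Disjoint Sα Sβ := by
    obtain ⟨i, hi⟩ : s.Nonempty := by
      rw [nonempty_iff_ne_empty, Ne, Perm.support_eq_empty_iff, inv_mul_eq_one]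
      exact hne
    refine disjoint_filter.mpr fun σ _ hσα hσβ => ?_
    refine Perm.mem_support.mp hi ?_
    rw [Perm.mul_apply, ← hσβ i hi, hσα i hi]
    exact α.symm_apply_apply i
  have hsupp : ∑ σ, A.detTerm σ = ∑ σ ∈ Sα ∪ Sβ, A.detTerm σ := by
    refine (sum_subset (subset_univ _) fun σ _ hσ => detTerm_eq_zero ?_).symm
    by_contra hσ0
    simp only [Sα, Sβ, mem_union, mem_filter, mem_univ, true_and] at hσ
    exact hσ (h σ hσ0)
  have hSβ : ∑ σ ∈ Sβ, A.detTerm σ = ∑ σ ∈ Sα, A.detTerm (σ * π) :=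
    (sum_equiv (Equiv.mulRight π) (fun σ => by
      simp only [Sα, Sβ, mem_filter, mem_univ, true_and, coe_mulRight]
      exact (mul_apply_eq_iff_of_inv_mul σ).symm)
      fun _ _ => rfl).symm
  rw [det_eq_sum_detTerm, hsupp, sum_union hdisj, hSβ,
    sum_congr rfl fun σ hσ => detTerm_mul_inv_mul_eq_neg hcancel (mem_filter.mp hσ).2,
    sum_neg_distrib, add_neg_cancel]

theorem sign_inv_mul_mul_prod_eq_neg_of_isCycle {A : Matrix ι ι ℝ}
    (hcyc : (α⁻¹ * β).IsCycle)
    (he : (-1 : ℝ) ^ #(α⁻¹ * β).support *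
      ∏ i ∈ (α⁻¹ * β).support, Real.sign (A i (α i) * A i (β i)) = 1)
    (hs : ∏ i ∈ (α⁻¹ * β).support, |A i (α i)| = ∏ i ∈ (α⁻¹ * β).support, |A i (β i)|) :
    (Perm.sign (α⁻¹ * β) : ℝ) * ∏ i ∈ (α⁻¹ * β).support, A i (β i) =
      -∏ i ∈ (α⁻¹ * β).support, A i (α i) := by
  set s := (α⁻¹ * β).support
  have hsq : ((-1 : ℝ) ^ #s) * (-1) ^ #s = 1 := by rw [← mul_pow]; norm_num
  have hsign : Real.sign ((∏ i ∈ s, A i (α i)) * ∏ i ∈ s, A i (β i)) = (-1) ^ #s := by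
    rw [← prod_mul_distrib, Real.sign_prod]
    calc _ = (-1) ^ #s * ((-1) ^ #s * ∏ i ∈ s, Real.sign (A i (α i) * A i (β i))) := by
          rw [← mul_assoc, hsq, one_mul]
      _ = (-1) ^ #s := by rw [he, mul_one]
  have hβ : ∏ i ∈ s, A i (β i) = (-1) ^ #s * ∏ i ∈ s, A i (α i) := by
    rw [← hsign]
    exact Real.eq_sign_mul_mul_of_abs_eq (by simpa only [abs_prod] using hs)
  rw [hcyc.sign, hβ]
  push_cast
  rw [neg_mul, ← mul_assoc, hsq, one_mul]

end Matrix

theorem exists_term_avoiding_both_halves_general {n : ℕ} (A : Matrix (Fin n) (Fin n) ℝ)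
    (hdet : A.det ≠ 0) (α β : Equiv.Perm (Fin n))
    (hcyc : (α⁻¹ * β).IsCycle)
    (he : (-1 : ℝ) ^ (α⁻¹ * β).support.card *
      ∏ i ∈ (α⁻¹ * β).support, Real.sign (A i (α i) * A i (β i)) = 1)
    (hs : ∏ i ∈ (α⁻¹ * β).support, |A i (α i)| =
      ∏ i ∈ (α⁻¹ * β).support, |A i (β i)|) :
    ∃ σ : Equiv.Perm (Fin n), (∏ i, A i (σ i)) ≠ 0 ∧
      (∃ i ∈ (α⁻¹ * β).support, σ i ≠ α i) ∧
      (∃ i ∈ (α⁻¹ * β).support, σ i ≠ β i) := by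
  by_contra! h
  refine hdet (A.det_eq_zero_of_forall_eqOn_or_eqOn ?_
    (A.sign_inv_mul_mul_prod_eq_neg_of_isCycle hcyc he hs) fun σ hσ => ?_)
  · rintro rfl
    exact hcyc.ne_one (inv_mul_cancel α)
  · refine or_iff_not_imp_left.mpr fun hα => h σ hσ ?_
    simpa using hα

/-- Let `A` be an `n×n` real matrix with `det A ≠ 0`, and `α, β` permutations with
nonzero determinant terms `T_α = sgn(α)·∏ A i (α i)` and `T_β = sgn(β)·∏ A i (β i)`.
Suppose `π = α⁻¹ ∘ β` is a single cycle with support `s`, and the corresponding SR-graph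
cycle is both an e-cycle (`(-1)^{|s|} · ∏_{i∈s} sign(A i (α i) · A i (β i)) = 1`) and an
s-cycle (`∏_{i∈s} |A i (α i)| = ∏_{i∈s} |A i (β i)|`). Then there exists a permutation
`σ` with `∏ i, A i (σ i) ≠ 0` such that `σ i ≠ α i` for some `i ∈ s` and `σ i ≠ β i` for
some `i ∈ s` (its term subgraph contains neither half of the disconnecting partition). -/
theorem exists_term_avoiding_both_halves {n : ℕ} (A : Matrix (Fin n) (Fin n) ℝ)
    (hdet : A.det ≠ 0) (α β : Equiv.Perm (Fin n))
    (hα : ((Equiv.Perm.sign α : ℤ) : ℝ) * ∏ i, A i (α i) ≠ 0)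
    (hβ : ((Equiv.Perm.sign β : ℤ) : ℝ) * ∏ i, A i (β i) ≠ 0)
    (hcyc : (α⁻¹ * β).IsCycle)
    (he : (-1 : ℝ) ^ (α⁻¹ * β).support.card *
      ∏ i ∈ (α⁻¹ * β).support, Real.sign (A i (α i) * A i (β i)) = 1)
    (hs : ∏ i ∈ (α⁻¹ * β).support, |A i (α i)| =
      ∏ i ∈ (α⁻¹ * β).support, |A i (β i)|) :
    ∃ σ : Equiv.Perm (Fin n), (∏ i, A i (σ i)) ≠ 0 ∧
      (∃ i ∈ (α⁻¹ * β).support, σ i ≠ α i) ∧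
      (∃ i ∈ (α⁻¹ * β).support, σ i ≠ β i) :=
  exists_term_avoiding_both_halves_general A hdet α β hcyc he hs
end

section
/- Let S be a real n×m matrix, let C = (r, a, b) be an e-cycle of G(S), and let D be an S-to-R path of G(S), given by (p, u, w), whose initial S-vertex u 0 equals a J for some J and whose terminal R-vertex w p equals b K for some K, such that no edge of D is an edge of C and no vertex of D other than u 0 and w p lies on C. Then G(S) contains two e-cycles with distinct edge sets having S-to-R intersection. -/
namespace SRGraph

/-- An S-to-R path of `G(S)`: `p ≥ 0` and injective `u : Fin (p+1) → Fin n`,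
`w : Fin (p+1) → Fin m` with `S (u i) (w i) ≠ 0` for all `i` and
`S (u (i+1)) (w i) ≠ 0` for all `i < p`; it joins S-vertex `u 0` to R-vertex `w p`. -/
def IsSRPath (S : Matrix (Fin n) (Fin m) ℝ) {p : ℕ}
    (u : Fin (p + 1) → Fin n) (w : Fin (p + 1) → Fin m) : Prop :=
  Function.Injective u ∧ Function.Injective w ∧
    (∀ i, S (u i) (w i) ≠ 0) ∧ (∀ i : Fin p, S (u i.succ) (w i.castSucc) ≠ 0)

end SRGraph

/-!
The S-vertex `a J` and the R-vertex `b K` cut `C` into two S-to-R paths `A₁` and `A₂` from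
`a J` to `b K`, and `D` closes each of them into a cycle `D ∪ Aᵢ`. The signs of the edges of `D`
enter both `P(D ∪ A₁)` and `P(D ∪ A₂)`, and the half-lengths of these two cycles add up to that of
`C` plus an odd number, so `P(D ∪ A₁) P(D ∪ A₂) = -P(C) = -1`: one of the `D ∪ Aᵢ` is an e-cycle. It
contains the edges of `D`, which are not edges of `C`, and its intersection with `C` is the
S-to-R path `Aᵢ`.
-/

namespace SRGraph

variable {n m : ℕ}

open Finset Fin.CommRing

/- Paths and cycles are indexed below by natural numbers cast into `Fin (N + 1)`; the cast
reduces modulo `N + 1`, which takes care of the cyclic indexing of cycles. -/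
section NatCast

variable {N : ℕ}

theorem natCast_injOn {k l : ℕ} (hk : k ≤ N) (hl : l ≤ N)
    (h : (k : Fin (N + 1)) = l) : k = l := by
  simpa [Fin.val_cast_of_lt (Nat.lt_succ_of_le hk), Fin.val_cast_of_lt (Nat.lt_succ_of_le hl)]
    using congrArg Fin.val h

theorem injective_of_natCast {α : Type*} {f : Fin (N + 1) → α}
    (hf : ∀ k l, k ≤ N → l ≤ N → f k = f l → k = l) : Function.Injective f := fun i j h =>
  Fin.ext <| hf i j i.is_le j.is_le (by simpa only [Fin.cast_val_eq_self])

theorem exists_fin_iff_exists_natCast {P : Fin (N + 1) → Prop} :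
    (∃ j, P j) ↔ ∃ k ≤ N, P k :=
  ⟨fun ⟨j, hj⟩ => ⟨j, j.is_le, by rwa [Fin.cast_val_eq_self]⟩, fun ⟨k, _, hk⟩ => ⟨k, hk⟩⟩

theorem prod_univ_eq_prod_range_natCast {M : Type*} [CommMonoid M] (f : Fin (N + 1) → M) :
    ∏ i, f i = ∏ k ∈ range (N + 1), f k := by
  simpa only [Fin.cast_val_eq_self] using Fin.prod_univ_eq_prod_range (fun k => f k) (N + 1)

theorem natCast_sub_of_le {k : ℕ} (hk : k ≤ N + 1) :
    ((N + 1 - k : ℕ) : Fin (N + 1)) = -k := by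
  rw [Nat.cast_sub hk, Fin.natCast_self, zero_sub]

theorem natCast_sub_succ_of_le {k : ℕ} (hk : k ≤ N) :
    ((N - k : ℕ) : Fin (N + 1)) = -(k + 1) := by
  simpa using natCast_sub_of_le (N := N) (Nat.succ_le_succ hk)

theorem natCast_val_eq_castSucc (i : Fin N) : ((i : ℕ) : Fin (N + 1)) = i.castSucc :=
  Fin.ext (Fin.val_cast_of_lt (by omega))

theorem natCast_val_add_one_eq_succ (i : Fin N) : ((i + 1 : ℕ) : Fin (N + 1)) = i.succ :=
  Fin.ext (Fin.val_cast_of_lt (by omega))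

end NatCast

theorem sign_mul_self_of_ne_zero {x : ℝ} (hx : x ≠ 0) : Real.sign x * Real.sign x = 1 := by
  rcases Real.sign_apply_eq_of_ne_zero x hx with h | h <;> rw [h] <;> norm_num

theorem prod_sign_mul_self {ι : Type*} (s : Finset ι) (f : ι → ℝ) (hf : ∀ i ∈ s, f i ≠ 0) :
    (∏ i ∈ s, Real.sign (f i)) * ∏ i ∈ s, Real.sign (f i) = 1 := by
  rw [← prod_mul_distrib]
  exact prod_eq_one fun i hi => sign_mul_self_of_ne_zero (hf i hi)

def edgeSet (S : Matrix (Fin n) (Fin m) ℝ) : Set (Fin n × Fin m) := {e | S e.1 e.2 ≠ 0}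

def edgeEnds (E : Set (Fin n × Fin m)) : Set (Fin n ⊕ Fin m) :=
  (fun e => Sum.inl e.1) '' E ∪ (fun e => Sum.inr e.2) '' E

theorem edgeEnds_union (E F : Set (Fin n × Fin m)) :
    edgeEnds (E ∪ F) = edgeEnds E ∪ edgeEnds F := by
  simp only [edgeEnds, Set.image_union]
  exact Set.union_union_union_comm _ _ _ _

theorem edgeEnds_mono {E F : Set (Fin n × Fin m)} (h : E ⊆ F) : edgeEnds E ⊆ edgeEnds F :=
  Set.union_subset_union (Set.image_mono h) (Set.image_mono h)

section Path

variable {p : ℕ} (u : Fin (p + 1) → Fin n) (w : Fin (p + 1) → Fin m)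

theorem pathEdges_eq : pathEdges u w =
    {e | ∃ k ≤ p, e = (u k, w k)} ∪ {e | ∃ k < p, e = (u (k + 1 : ℕ), w k)} := by
  ext e
  constructor
  · rintro (⟨i, rfl⟩ | ⟨i, rfl⟩)
    · exact Or.inl ⟨i, i.is_le, by rw [Fin.cast_val_eq_self]⟩
    · exact Or.inr ⟨i, i.2, by rw [natCast_val_add_one_eq_succ, natCast_val_eq_castSucc]⟩
  · rintro (⟨k, hk, rfl⟩ | ⟨k, hk, rfl⟩)
    · exact Or.inl ⟨k, rfl⟩
    · exact Or.inr ⟨⟨k, hk⟩, by rw [← natCast_val_add_one_eq_succ, ← natCast_val_eq_castSucc]⟩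

theorem pathVerts_eq_edgeEnds : pathVerts u w = edgeEnds (pathEdges u w) := by
  apply Set.Subset.antisymm
  · rintro _ (⟨i, rfl⟩ | ⟨i, rfl⟩)
    · exact Or.inl ⟨(u i, w i), Or.inl ⟨i, rfl⟩, rfl⟩
    · exact Or.inr ⟨(u i, w i), Or.inl ⟨i, rfl⟩, rfl⟩
  · rintro _ (⟨_, ⟨i, rfl⟩ | ⟨i, rfl⟩, rfl⟩ | ⟨_, ⟨i, rfl⟩ | ⟨i, rfl⟩, rfl⟩)
    exacts [Or.inl ⟨_, rfl⟩, Or.inl ⟨_, rfl⟩, Or.inr ⟨_, rfl⟩, Or.inr ⟨_, rfl⟩]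

theorem isSRPath_iff (S : Matrix (Fin n) (Fin m) ℝ) : IsSRPath S u w ↔
    Function.Injective u ∧ Function.Injective w ∧ pathEdges u w ⊆ edgeSet S := by
  refine and_congr_right' (and_congr_right' ⟨?_, fun h => ⟨?_, ?_⟩⟩)
  · rintro ⟨hd, ho⟩ _ (⟨i, rfl⟩ | ⟨i, rfl⟩)
    exacts [hd i, ho i]
  · exact fun i => h (Or.inl ⟨i, rfl⟩)
  · exact fun i => h (Or.inr ⟨i, rfl⟩)

noncomputable def pathSign (S : Matrix (Fin n) (Fin m) ℝ) : ℝ :=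
  (∏ k ∈ range (p + 1), Real.sign (S (u k) (w k))) *
    ∏ k ∈ range p, Real.sign (S (u (k + 1 : ℕ)) (w k))

variable {u w}

theorem pathSign_mul_self {S : Matrix (Fin n) (Fin m) ℝ} (hP : pathEdges u w ⊆ edgeSet S) :
    pathSign u w S * pathSign u w S = 1 := by
  rw [pathEdges_eq, Set.union_subset_iff] at hP
  rw [pathSign, mul_mul_mul_comm,
    prod_sign_mul_self _ _ fun k hk => hP.1 ⟨k, Nat.le_of_lt_succ (mem_range.1 hk), rfl⟩,
    prod_sign_mul_self _ _ fun k hk => hP.2 ⟨k, mem_range.1 hk, rfl⟩, one_mul]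

instance inst_s8 (E : Set (Fin n × Fin m)) : Std.Symm (adjOf E) where
  symm x y h := by
    cases x <;> cases y <;> exact h

theorem reflTransGen_adjOf_pathEdges {k : ℕ} (hk : k ≤ p) :
    Relation.ReflTransGen (adjOf (pathEdges u w)) (Sum.inl (u 0)) (Sum.inl (u k)) ∧
      Relation.ReflTransGen (adjOf (pathEdges u w)) (Sum.inl (u 0)) (Sum.inr (w k)) := by
  have diag : ∀ k ≤ p, adjOf (pathEdges u w) (Sum.inl (u k)) (Sum.inr (w k)) := fun k hk => by
    show (u k, w k) ∈ pathEdges u w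
    rw [pathEdges_eq]
    exact Or.inl ⟨k, hk, rfl⟩
  induction k with
  | zero => exact ⟨.refl, .single (diag 0 hk)⟩
  | succ k ih =>
    have off : adjOf (pathEdges u w) (Sum.inr (w k)) (Sum.inl (u (k + 1 : ℕ))) := by
      show (u (k + 1 : ℕ), w k) ∈ pathEdges u w
      rw [pathEdges_eq]
      exact Or.inr ⟨k, hk, rfl⟩
    have hu := (ih (by omega)).2.tail off
    exact ⟨hu, hu.tail (diag _ hk)⟩

theorem componentOf_pathEdges {v : Fin n ⊕ Fin m} (hv : v ∈ pathVerts u w) :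
    componentOf (pathEdges u w) (pathVerts u w) v = pathVerts u w := by
  have from_start : ∀ z ∈ pathVerts u w,
      Relation.ReflTransGen (adjOf (pathEdges u w)) (Sum.inl (u 0)) z := by
    rintro _ (⟨i, rfl⟩ | ⟨i, rfl⟩)
    · simpa using (reflTransGen_adjOf_pathEdges (u := u) (w := w) i.is_le).1
    · simpa using (reflTransGen_adjOf_pathEdges (u := u) (w := w) i.is_le).2
  exact Set.sep_eq_self_iff_mem_true.2 fun z hz =>
    (symm_of _ (from_start v hv)).trans (from_start z hz)

theorem srIntersection_pathVerts (hu : Function.Injective u) (hw : Function.Injective w) :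
    SRIntersection (pathVerts u w) (pathEdges u w) := by
  refine ⟨⟨_, Or.inl ⟨0, rfl⟩⟩,
    fun v hv => ⟨p, u, w, hu, hw, (componentOf_pathEdges hv).symm, ?_⟩⟩
  rw [componentOf_pathEdges hv, eq_comm, Set.sep_eq_self_iff_mem_true, pathVerts_eq_edgeEnds]
  exact fun e he => Or.inl ⟨e, he, rfl⟩

end Path

section Cycle

variable {r : ℕ} (a : Fin r → Fin n) (b : Fin r → Fin m)

theorem isCyc_iff (S : Matrix (Fin n) (Fin m) ℝ) : IsCyc S a b ↔
    2 ≤ r ∧ Function.Injective a ∧ Function.Injective b ∧ cycEdges a b ⊆ edgeSet S := by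
  refine and_congr_right' (and_congr_right' (and_congr_right' ⟨?_, fun h => ⟨?_, ?_⟩⟩))
  · rintro ⟨hd, ho⟩ _ ⟨j, rfl | rfl⟩
    exacts [hd j, ho j]
  · exact fun j => h ⟨j, Or.inl rfl⟩
  · exact fun j => h ⟨j, Or.inr rfl⟩

theorem cycVerts_eq_edgeEnds : cycVerts a b = edgeEnds (cycEdges a b) := by
  apply Set.Subset.antisymm
  · rintro _ (⟨j, rfl⟩ | ⟨j, rfl⟩)
    · exact Or.inl ⟨(a j, b j), ⟨j, Or.inl rfl⟩, rfl⟩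
    · exact Or.inr ⟨(a j, b j), ⟨j, Or.inl rfl⟩, rfl⟩
  · rintro _ (⟨_, ⟨j, rfl | rfl⟩, rfl⟩ | ⟨_, ⟨j, rfl | rfl⟩, rfl⟩)
    exacts [Or.inl ⟨_, rfl⟩, Or.inl ⟨_, rfl⟩, Or.inr ⟨_, rfl⟩, Or.inr ⟨_, rfl⟩]

theorem parity_mul_self {S : Matrix (Fin n) (Fin m) ℝ} (hE : cycEdges a b ⊆ edgeSet S) :
    parity S a b * parity S a b = 1 := by
  set d := ∏ j, Real.sign (S (a j) (b j))
  set o := ∏ j, Real.sign (S (a j) (b (finRotate r j)))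
  calc parity S a b * parity S a b = (-1) ^ (r + r) * ((d * d) * (o * o)) := by
        rw [parity, prod_mul_distrib]; ring
    _ = 1 := by
      rw [Even.neg_one_pow ⟨r, rfl⟩, prod_sign_mul_self _ _ fun j _ => hE ⟨j, Or.inl rfl⟩,
        prod_sign_mul_self _ _ fun j _ => hE ⟨j, Or.inr rfl⟩, one_mul, one_mul]

/-- With the R-vertices written as `c ∘ (finRotate r).symm`, `c j` is the R-vertex following
the S-vertex `a j`. -/
theorem cycEdges_comp_finRotate_symm (c : Fin r → Fin m) :
    cycEdges a (c ∘ (finRotate r).symm) =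
      {e | ∃ j, e = (a j, c j) ∨ e = (a (finRotate r j), c j)} := by
  ext e
  simp only [cycEdges, Function.comp_apply, Set.mem_ofPred_eq, Equiv.symm_apply_apply]
  constructor
  · rintro ⟨j, rfl | rfl⟩
    · exact ⟨(finRotate r).symm j, Or.inr (by rw [Equiv.apply_symm_apply])⟩
    · exact ⟨j, Or.inl rfl⟩
  · rintro ⟨j, rfl | rfl⟩
    · exact ⟨j, Or.inr rfl⟩
    · exact ⟨finRotate r j, Or.inl (by rw [Equiv.symm_apply_apply])⟩

theorem parity_comp_finRotate_symm (S : Matrix (Fin n) (Fin m) ℝ) (c : Fin r → Fin m) :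
    parity S a (c ∘ (finRotate r).symm) = (-1) ^ r *
      ((∏ j, Real.sign (S (a j) (c j))) * ∏ j, Real.sign (S (a (finRotate r j)) (c j))) := by
  simp only [parity, Function.comp_apply, Equiv.symm_apply_apply, prod_mul_distrib]
  rw [mul_comm (∏ j, Real.sign (S (a j) (c ((finRotate r).symm j))))]
  congr 2
  exact Fintype.prod_equiv (finRotate r).symm _ _ fun j => by rw [Equiv.apply_symm_apply]

end Cycle

section Rotate

variable {N : ℕ} (a : Fin (N + 1) → Fin n) (b : Fin (N + 1) → Fin m) (J : Fin (N + 1))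

theorem cycEdges_comp_addLeft :
    cycEdges (fun i => a (J + i)) (fun i => b (J + i)) = cycEdges a b := by
  ext e
  simp only [cycEdges, Set.mem_ofPred_eq, finRotate_apply, ← add_assoc]
  exact ⟨fun ⟨j, h⟩ => ⟨J + j, h⟩, fun ⟨j, h⟩ => ⟨j - J, by rwa [add_sub_cancel]⟩⟩

theorem parity_comp_addLeft (S : Matrix (Fin n) (Fin m) ℝ) :
    parity S (fun i => a (J + i)) (fun i => b (J + i)) = parity S a b := by
  simp only [parity, finRotate_apply, ← add_assoc]
  congr 1
  exact Fintype.prod_equiv (Equiv.addLeft J) _ _ fun j => rfl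

end Rotate

section Glue

variable {N p q : ℕ}

/-- The S-vertices of the closed walk `u 0, w 0, u 1, …, u p, w p, x q, y (q-1), …, x 1, y 0`
through two S-to-R paths `(u, w)` and `(x, y)` with `x 0 = u 0` and `y q = w p`; it has length
`2 (N + 1)` when `N = p + q`. -/
def glueA {α : Type*} (N : ℕ) (u : Fin (p + 1) → α) (x : Fin (q + 1) → α) : Fin (N + 1) → α :=
  fun j => if (j : ℕ) ≤ p then u (j : ℕ) else x (N + 1 - j : ℕ)

/-- `glueNext N w y j` is the R-vertex following the S-vertex `glueA N u x j` on that walk. -/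
def glueNext {α : Type*} (N : ℕ) (w : Fin (p + 1) → α) (y : Fin (q + 1) → α) :
    Fin (N + 1) → α :=
  fun j => if (j : ℕ) ≤ p then w (j : ℕ) else y (N - j : ℕ)

def glueB {α : Type*} (N : ℕ) (w : Fin (p + 1) → α) (y : Fin (q + 1) → α) : Fin (N + 1) → α :=
  glueNext N w y ∘ (finRotate (N + 1)).symm

section Values

variable {α : Type*} {u w : Fin (p + 1) → α} {x y : Fin (q + 1) → α} {k : ℕ}

theorem glueA_natCast (hk : k ≤ N) :
    glueA N u x k = if k ≤ p then u k else x (N + 1 - k : ℕ) := by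
  simp only [glueA, Fin.val_cast_of_lt (Nat.lt_succ_of_le hk)]

theorem glueA_finRotate_natCast (hx : x 0 = u 0) (hp : p ≤ N) (hk : k ≤ N) :
    glueA N u x (finRotate (N + 1) k) = if k < p then u (k + 1 : ℕ) else x (N - k : ℕ) := by
  rw [finRotate_apply, ← Nat.cast_succ]
  rcases Nat.lt_or_eq_of_le hk with hk | rfl
  · rw [glueA_natCast hk]
    simp only [Nat.succ_le_iff, Nat.reduceSubDiff]
  · simp only [Fin.natCast_self, glueA, Fin.val_zero, if_pos (Nat.zero_le p),
      if_neg (not_lt.2 hp), Nat.sub_self, Nat.cast_zero, hx]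

theorem glueNext_natCast (hk : k ≤ N) :
    glueNext N w y k = if k ≤ p then w k else y (N - k : ℕ) := by
  simp only [glueNext, Fin.val_cast_of_lt (Nat.lt_succ_of_le hk)]

theorem glueNext_natCast' (hy : y (Fin.last q) = w (Fin.last p)) (hN : p + q = N)
    (hk : k ≤ N) : glueNext N w y k = if k < p then w k else y (N - k : ℕ) := by
  rw [glueNext_natCast hk]
  rcases lt_trichotomy k p with h | rfl | h
  · simp only [h, h.le, if_true]
  · rw [if_pos le_rfl, if_neg (lt_irrefl k), show N - k = q by omega, Fin.natCast_eq_last,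
      Fin.natCast_eq_last, hy]
  · simp only [not_le.2 h, not_lt.2 h.le, if_false]

end Values

variable {u : Fin (p + 1) → Fin n} {w : Fin (p + 1) → Fin m}
  {x : Fin (q + 1) → Fin n} {y : Fin (q + 1) → Fin m}

theorem glue_cycEdges (hx : x 0 = u 0) (hy : y (Fin.last q) = w (Fin.last p))
    (hN : p + q = N) : cycEdges (glueA N u x) (glueB N w y) = pathEdges u w ∪ pathEdges x y := by
  rw [glueB, cycEdges_comp_finRotate_symm, pathEdges_eq, pathEdges_eq]
  ext e
  simp only [Set.mem_ofPred_eq, Set.mem_union, exists_fin_iff_exists_natCast (N := N)]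
  constructor
  · rintro ⟨k, hk, rfl | rfl⟩
    · rw [glueA_natCast hk, glueNext_natCast hk]
      split_ifs with hkp
      · exact Or.inl (Or.inl ⟨k, hkp, rfl⟩)
      · exact Or.inr (Or.inr ⟨N - k, by omega, by rw [show N - k + 1 = N + 1 - k by omega]⟩)
    · rw [glueA_finRotate_natCast hx (by omega) hk, glueNext_natCast' hy hN hk]
      split_ifs with hkp
      · exact Or.inl (Or.inr ⟨k, hkp, rfl⟩)
      · exact Or.inr (Or.inl ⟨N - k, by omega, rfl⟩)
  · rintro ((⟨k, hk, rfl⟩ | ⟨k, hk, rfl⟩) | (⟨k, hk, rfl⟩ | ⟨k, hk, rfl⟩))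
    · refine ⟨k, by omega, Or.inl ?_⟩
      rw [glueA_natCast (by omega), glueNext_natCast (by omega), if_pos hk, if_pos hk]
    · refine ⟨k, by omega, Or.inr ?_⟩
      rw [glueA_finRotate_natCast hx (by omega) (by omega), glueNext_natCast' hy hN (by omega),
        if_pos hk, if_pos hk]
    · refine ⟨N - k, by omega, Or.inr ?_⟩
      rw [glueA_finRotate_natCast hx (by omega) (by omega), glueNext_natCast' hy hN (by omega),
        if_neg (by omega), if_neg (by omega), Nat.sub_sub_self (by omega)]
    · refine ⟨N - k, by omega, Or.inl ?_⟩
      rw [glueA_natCast (by omega), glueNext_natCast (by omega), if_neg (by omega),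
        if_neg (by omega), Nat.sub_sub_self (by omega), show N + 1 - (N - k) = k + 1 by omega]

theorem glue_cycVerts (hx : x 0 = u 0) (hy : y (Fin.last q) = w (Fin.last p))
    (hN : p + q = N) : cycVerts (glueA N u x) (glueB N w y) = pathVerts u w ∪ pathVerts x y := by
  rw [cycVerts_eq_edgeEnds, glue_cycEdges hx hy hN, edgeEnds_union, pathVerts_eq_edgeEnds,
    pathVerts_eq_edgeEnds]

theorem prod_sign_glueA_glueNext (S : Matrix (Fin n) (Fin m) ℝ) (hN : p + q = N) :
    ∏ j, Real.sign (S (glueA N u x j) (glueNext N w y j)) =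
      (∏ k ∈ range (p + 1), Real.sign (S (u k) (w k))) *
        ∏ k ∈ range q, Real.sign (S (x (k + 1 : ℕ)) (y k)) := by
  subst hN
  rw [prod_univ_eq_prod_range_natCast, show range (p + q + 1) = range (p + 1 + q) by
    rw [add_right_comm], prod_range_add,
    ← prod_range_reflect (fun k => Real.sign (S (x (k + 1 : ℕ)) (y k))) q]
  congr 1 <;> refine prod_congr rfl fun k hk => ?_ <;> rw [mem_range] at hk
  · rw [glueA_natCast (by omega), glueNext_natCast (by omega), if_pos (by omega),
      if_pos (by omega)]
  · rw [glueA_natCast (by omega), glueNext_natCast (by omega), if_neg (by omega),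
      if_neg (by omega), show p + q + 1 - (p + 1 + k) = q - 1 - k + 1 by omega,
      show p + q - (p + 1 + k) = q - 1 - k by omega]

theorem prod_sign_glueA_finRotate_glueNext (S : Matrix (Fin n) (Fin m) ℝ) (hx : x 0 = u 0)
    (hy : y (Fin.last q) = w (Fin.last p)) (hN : p + q = N) :
    ∏ j, Real.sign (S (glueA N u x (finRotate (N + 1) j)) (glueNext N w y j)) =
      (∏ k ∈ range p, Real.sign (S (u (k + 1 : ℕ)) (w k))) *
        ∏ k ∈ range (q + 1), Real.sign (S (x k) (y k)) := by
  subst hN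
  rw [prod_univ_eq_prod_range_natCast, show range (p + q + 1) = range (p + (q + 1)) by
    rw [add_assoc], prod_range_add,
    ← prod_range_reflect (fun k => Real.sign (S (x k) (y k))) (q + 1)]
  congr 1 <;> refine prod_congr rfl fun k hk => ?_ <;> rw [mem_range] at hk
  · rw [glueA_finRotate_natCast hx (by omega) (by omega), glueNext_natCast' hy rfl (by omega),
      if_pos hk, if_pos hk]
  · rw [glueA_finRotate_natCast hx (by omega) (by omega), glueNext_natCast' hy rfl (by omega),
      if_neg (by omega), if_neg (by omega), show p + q - (p + k) = q + 1 - 1 - k by omega]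

theorem glue_parity (S : Matrix (Fin n) (Fin m) ℝ) (hx : x 0 = u 0)
    (hy : y (Fin.last q) = w (Fin.last p)) (hN : p + q = N) :
    parity S (glueA N u x) (glueB N w y) = (-1) ^ (N + 1) * (pathSign u w S * pathSign x y S) := by
  rw [glueB, parity_comp_finRotate_symm, prod_sign_glueA_glueNext S hN,
    prod_sign_glueA_finRotate_glueNext S hx hy hN, pathSign, pathSign]
  ring

theorem glueA_injective (hu : Function.Injective u) (hx : Function.Injective x)
    (hN : p + q = N) (hux : ∀ i j, u i = x j → j = 0) : Function.Injective (glueA N u x) := by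
  have cross : ∀ k l, k ≤ p → p < l → l ≤ N → glueA N u x k ≠ glueA N u x l := by
    intro k l hk hpl hl h
    rw [glueA_natCast (by omega), glueA_natCast hl, if_pos hk, if_neg (by omega)] at h
    have := natCast_injOn (by omega) (Nat.zero_le q) (hux _ _ h)
    omega
  refine injective_of_natCast fun k l hk hl h => ?_
  rcases le_or_gt k p with hkp | hkp <;> rcases le_or_gt l p with hlp | hlp
  · rw [glueA_natCast hk, glueA_natCast hl, if_pos hkp, if_pos hlp] at h
    exact natCast_injOn hkp hlp (hu h)
  · exact absurd h (cross k l hkp hlp hl)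
  · exact absurd h.symm (cross l k hlp hkp hk)
  · rw [glueA_natCast hk, glueA_natCast hl, if_neg (by omega), if_neg (by omega)] at h
    have := natCast_injOn (by omega) (by omega) (hx h)
    omega

theorem glueNext_injective (hw : Function.Injective w) (hy : Function.Injective y)
    (hN : p + q = N) (hwy : ∀ i j, w i = y j → j = Fin.last q) :
    Function.Injective (glueNext N w y) := by
  have cross : ∀ k l, k ≤ p → p < l → l ≤ N → glueNext N w y k ≠ glueNext N w y l := by
    intro k l hk hpl hl h
    rw [glueNext_natCast (by omega), glueNext_natCast hl, if_pos hk, if_neg (by omega)] at h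
    have := natCast_injOn (by omega) le_rfl ((hwy _ _ h).trans (Fin.natCast_eq_last q).symm)
    omega
  refine injective_of_natCast fun k l hk hl h => ?_
  rcases le_or_gt k p with hkp | hkp <;> rcases le_or_gt l p with hlp | hlp
  · rw [glueNext_natCast hk, glueNext_natCast hl, if_pos hkp, if_pos hlp] at h
    exact natCast_injOn hkp hlp (hw h)
  · exact absurd h (cross k l hkp hlp hl)
  · exact absurd h.symm (cross l k hlp hkp hk)
  · rw [glueNext_natCast hk, glueNext_natCast hl, if_neg (by omega), if_neg (by omega)] at h
    have := natCast_injOn (by omega) (by omega) (hy h)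
    omega

theorem glue_isCyc {S : Matrix (Fin n) (Fin m) ℝ} (hP : IsSRPath S u w) (hQ : IsSRPath S x y)
    (hx : x 0 = u 0) (hy : y (Fin.last q) = w (Fin.last p)) (hN : p + q = N)
    (hE : Disjoint (pathEdges u w) (pathEdges x y))
    (hV : pathVerts u w ∩ pathVerts x y ⊆ {Sum.inl (u 0), Sum.inr (w (Fin.last p))}) :
    IsCyc S (glueA N u x) (glueB N w y) := by
  rw [isSRPath_iff] at hP hQ
  rw [isCyc_iff, glue_cycEdges hx hy hN]
  refine ⟨?_, glueA_injective hP.1 hQ.1 hN fun i j h => ?_,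
    (glueNext_injective hP.2.1 hQ.2.1 hN fun i j h => ?_).comp (Equiv.injective _),
    Set.union_subset hP.2.2 hQ.2.2⟩
  · by_contra! hN0
    obtain ⟨rfl, rfl⟩ : p = 0 ∧ q = 0 := by omega
    refine Set.disjoint_left.1 hE (Or.inl ⟨0, rfl⟩) (Or.inl ⟨0, ?_⟩)
    rw [hx, show (0 : Fin 1) = Fin.last 0 from rfl, hy]
  · have hv := hV ⟨Or.inl ⟨i, rfl⟩, Or.inl ⟨j, congrArg Sum.inl h.symm⟩⟩
    simp only [Set.mem_insert_iff, Set.mem_singleton_iff, reduceCtorEq, or_false,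
      Function.comp_apply, Sum.inl.injEq] at hv
    exact hQ.1 (by rw [← h, hv, hx])
  · have hv := hV ⟨Or.inr ⟨i, rfl⟩, Or.inr ⟨j, congrArg Sum.inr h.symm⟩⟩
    simp only [Set.mem_insert_iff, Set.mem_singleton_iff, reduceCtorEq, false_or,
      Function.comp_apply, Sum.inr.injEq] at hv
    exact hQ.2.1 (by rw [← h, hv, hy])

end Glue

section Arcs

variable {α : Type*} {N : ℕ}

def fwdArc (J : Fin (N + 1)) (t : ℕ) (f : Fin (N + 1) → α) : Fin (t + 1) → α :=
  fun i => f (J + (i : ℕ))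

def bwdArc (J : Fin (N + 1)) (s : ℕ) (f : Fin (N + 1) → α) : Fin (s + 1) → α :=
  fun i => f (J - (i : ℕ))

variable (J : Fin (N + 1)) {t k : ℕ} {f : Fin (N + 1) → α}

theorem fwdArc_natCast (hk : k ≤ t) : fwdArc J t f k = f (J + k) := by
  rw [fwdArc, Fin.val_cast_of_lt (Nat.lt_succ_of_le hk)]

theorem bwdArc_natCast (hk : k ≤ t) : bwdArc J t f k = f (J - k) := by
  rw [bwdArc, Fin.val_cast_of_lt (Nat.lt_succ_of_le hk)]

theorem fwdArc_injective (hf : Function.Injective f) (ht : t ≤ N) :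
    Function.Injective (fwdArc J t f) := fun i j h =>
  Fin.ext <| natCast_injOn (i.is_le.trans ht) (j.is_le.trans ht) (add_left_cancel (hf h))

theorem bwdArc_injective (hf : Function.Injective f) (ht : t ≤ N) :
    Function.Injective (bwdArc J t f) := fun i j h =>
  Fin.ext <| natCast_injOn (i.is_le.trans ht) (j.is_le.trans ht) (sub_right_injective (hf h))

theorem glueA_arcs (ht : t ≤ N) :
    glueA N (fwdArc J t f) (bwdArc J (N - t) f) = fun i => f (J + i) := by
  refine funext fun i => ?_
  rw [← Fin.cast_val_eq_self i, glueA_natCast i.is_le]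
  split_ifs with hi
  · exact fwdArc_natCast J hi
  · rw [bwdArc_natCast J (by omega), natCast_sub_of_le (by omega), sub_neg_eq_add]

theorem glueB_arcs (ht : t ≤ N) :
    glueB N (fwdArc (J + 1) t f) (bwdArc J (N - t) f) = fun i => f (J + i) := by
  have hnext : glueNext N (fwdArc (J + 1) t f) (bwdArc J (N - t) f) = fun i => f (J + 1 + i) := by
    refine funext fun i => ?_
    rw [← Fin.cast_val_eq_self i, glueNext_natCast i.is_le]
    split_ifs with hi
    · exact fwdArc_natCast (J + 1) hi
    · rw [bwdArc_natCast J (by omega), natCast_sub_succ_of_le i.is_le]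
      ring_nf
  refine funext fun i => ?_
  rw [glueB, hnext, Function.comp_apply, add_assoc, add_comm 1, ← finRotate_apply,
    Equiv.apply_symm_apply]

end Arcs

theorem exists_arcs {S : Matrix (Fin n) (Fin m) ℝ} {r : ℕ} {a : Fin r → Fin n}
    {b : Fin r → Fin m} (hC : IsCyc S a b) (J K : Fin r) :
    ∃ (t s : ℕ) (x₁ : Fin (t + 1) → Fin n) (y₁ : Fin (t + 1) → Fin m)
      (x₂ : Fin (s + 1) → Fin n) (y₂ : Fin (s + 1) → Fin m),
      IsSRPath S x₁ y₁ ∧ IsSRPath S x₂ y₂ ∧ x₁ 0 = a J ∧ y₁ (Fin.last t) = b K ∧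
      x₂ 0 = a J ∧ y₂ (Fin.last s) = b K ∧
      pathEdges x₁ y₁ ∪ pathEdges x₂ y₂ = cycEdges a b ∧
      parity S (glueA (t + s) x₁ x₂) (glueB (t + s) y₁ y₂) = parity S a b := by
  obtain ⟨N, rfl⟩ : ∃ N, r = N + 1 := ⟨r - 1, by have := hC.1; omega⟩
  rw [isCyc_iff] at hC
  obtain ⟨t, ht, hK⟩ : ∃ t ≤ N, J + 1 + (t : Fin (N + 1)) = K :=
    ⟨(K - J - 1 : Fin (N + 1)), Fin.is_le _, by rw [Fin.cast_val_eq_self]; ring⟩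
  have hx : bwdArc J (N - t) a 0 = fwdArc J t a 0 := by
    simp only [fwdArc, bwdArc, Fin.val_zero, Nat.cast_zero, add_zero, sub_zero]
  have hy : bwdArc J (N - t) b (Fin.last _) = fwdArc (J + 1) t b (Fin.last t) := by
    simp only [fwdArc, bwdArc, Fin.val_last, natCast_sub_succ_of_le ht]
    ring_nf
  have h0 : fwdArc J t a 0 = a J := by
    simp only [fwdArc, Fin.val_zero, Nat.cast_zero, add_zero]
  have hlast : fwdArc (J + 1) t b (Fin.last t) = b K := by
    simp only [fwdArc, Fin.val_last, hK]
  -- gluing the two arcs gives back `C`, rotated to start at `a J`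
  have hE : pathEdges (fwdArc J t a) (fwdArc (J + 1) t b) ∪
      pathEdges (bwdArc J (N - t) a) (bwdArc J (N - t) b) = cycEdges a b := by
    rw [← glue_cycEdges hx hy (Nat.add_sub_cancel' ht), glueA_arcs J ht, glueB_arcs J ht,
      cycEdges_comp_addLeft]
  refine ⟨t, N - t, _, _, _, _, (isSRPath_iff _ _ S).2 ⟨fwdArc_injective J hC.2.1 ht,
      fwdArc_injective (J + 1) hC.2.2.1 ht, (hE ▸ Set.subset_union_left).trans hC.2.2.2⟩,
    (isSRPath_iff _ _ S).2 ⟨bwdArc_injective J hC.2.1 (Nat.sub_le N t),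
      bwdArc_injective J hC.2.2.1 (Nat.sub_le N t),
      (hE ▸ Set.subset_union_right).trans hC.2.2.2⟩,
    h0, hlast, hx.trans h0, hy.trans hlast, hE, ?_⟩
  rw [Nat.add_sub_cancel' ht, glueA_arcs J ht, glueB_arcs J ht, parity_comp_addLeft]

theorem parity_glue_eq_one_or {S : Matrix (Fin n) (Fin m) ℝ} {p q₁ q₂ : ℕ}
    {u : Fin (p + 1) → Fin n} {w : Fin (p + 1) → Fin m}
    {x₁ : Fin (q₁ + 1) → Fin n} {y₁ : Fin (q₁ + 1) → Fin m}
    {x₂ : Fin (q₂ + 1) → Fin n} {y₂ : Fin (q₂ + 1) → Fin m}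
    (hP : pathEdges u w ⊆ edgeSet S) (hQ₁ : pathEdges x₁ y₁ ⊆ edgeSet S)
    (hx₁ : x₁ 0 = u 0) (hy₁ : y₁ (Fin.last q₁) = w (Fin.last p))
    (hx₂ : x₂ 0 = u 0) (hy₂ : y₂ (Fin.last q₂) = w (Fin.last p))
    (h : parity S (glueA (q₁ + q₂) x₁ x₂) (glueB (q₁ + q₂) y₁ y₂) = 1) :
    parity S (glueA (p + q₁) u x₁) (glueB (p + q₁) w y₁) = 1 ∨
      parity S (glueA (p + q₂) u x₂) (glueB (p + q₂) w y₂) = 1 := by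
  have hsq := parity_mul_self (S := S) (glueA (p + q₁) u x₁) (glueB (p + q₁) w y₁)
    (by rw [glue_cycEdges hx₁ hy₁ rfl]; exact Set.union_subset hP hQ₁)
  have hprod : parity S (glueA (p + q₁) u x₁) (glueB (p + q₁) w y₁) *
      parity S (glueA (p + q₂) u x₂) (glueB (p + q₂) w y₂) = -1 := by
    rw [glue_parity S (hx₂.trans hx₁.symm) (hy₂.trans hy₁.symm) rfl] at h
    rw [glue_parity S hx₁ hy₁ rfl, glue_parity S hx₂ hy₂ rfl]
    linear_combination -(-1) ^ (p + p) * pathSign u w S * pathSign u w S * h -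
      (-1) ^ (p + p) * pathSign_mul_self hP - (Even.neg_one_pow ⟨p, rfl⟩ : (-1 : ℝ) ^ (p + p) = 1)
  rcases mul_self_eq_one_iff.1 hsq with h₁ | h₁
  · exact Or.inl h₁
  · rw [h₁] at hprod
    exact Or.inr (by linarith)

theorem twoECycles_of_arc {S : Matrix (Fin n) (Fin m) ℝ} {r : ℕ} {a : Fin r → Fin n}
    {b : Fin r → Fin m} (hC : IsCyc S a b) (hCe : parity S a b = 1)
    {p : ℕ} {u : Fin (p + 1) → Fin n} {w : Fin (p + 1) → Fin m} (hD : IsSRPath S u w)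
    (hedge : pathEdges u w ∩ cycEdges a b = ∅)
    (hvert : pathVerts u w ∩ cycVerts a b ⊆ {Sum.inl (u 0), Sum.inr (w (Fin.last p))})
    {q : ℕ} {x : Fin (q + 1) → Fin n} {y : Fin (q + 1) → Fin m} (hA : IsSRPath S x y)
    (hx : x 0 = u 0) (hy : y (Fin.last q) = w (Fin.last p)) (hAC : pathEdges x y ⊆ cycEdges a b)
    (he : parity S (glueA (p + q) u x) (glueB (p + q) w y) = 1) :
    TwoECyclesWithSRIntersection S := by
  have hAV : pathVerts x y ⊆ cycVerts a b := by
    rw [pathVerts_eq_edgeEnds, cycVerts_eq_edgeEnds]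
    exact edgeEnds_mono hAC
  have hends : pathVerts u w ∩ cycVerts a b ⊆ pathVerts x y := by
    refine hvert.trans (Set.insert_subset_iff.2 ⟨Or.inl ⟨0, ?_⟩,
      Set.singleton_subset_iff.2 (Or.inr ⟨Fin.last q, ?_⟩)⟩)
    · simp only [Function.comp_apply, hx]
    · simp only [Function.comp_apply, hy]
  have hdisj : Disjoint (pathEdges u w) (cycEdges a b) := Set.disjoint_iff_inter_eq_empty.2 hedge
  refine ⟨_, a, b, _, _, _, hC, hCe, glue_isCyc hD hA hx hy rfl (hdisj.mono_right hAC)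
    ((Set.inter_subset_inter_right _ hAV).trans hvert), he, fun hCD => ?_, ?_⟩
  · have h₀ : (u 0, w 0) ∈ pathEdges u w := Or.inl ⟨0, rfl⟩
    refine Set.disjoint_left.1 hdisj h₀ ?_
    rw [hCD, glue_cycEdges hx hy rfl]
    exact Or.inl h₀
  · rw [glue_cycEdges hx hy rfl, glue_cycVerts hx hy rfl, Set.inter_union_distrib_left,
      Set.inter_union_distrib_left, Set.inter_comm (cycEdges a b), hedge, Set.empty_union,
      Set.inter_comm (cycVerts a b) (pathVerts u w), Set.inter_eq_right.2 hAC,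
      Set.inter_eq_right.2 hAV, Set.union_eq_right.2 hends]
    exact srIntersection_pathVerts hA.1 hA.2.1

end SRGraph

open SRGraph in
/-- If `C = (r, a, b)` is an e-cycle of `G(S)` and `D = (p, u, w)` is an S-to-R path of
`G(S)` whose initial S-vertex `u 0` is a vertex `a J` of `C` and whose terminal R-vertex
`w p` is a vertex `b K` of `C`, such that no edge of `D` is an edge of `C` and no vertex
of `D` other than `u 0` and `w p` lies on `C`, then `G(S)` contains two e-cycles with
distinct edge sets having S-to-R intersection. -/
theorem two_ecycles_of_slicing_path {n m : ℕ} (S : Matrix (Fin n) (Fin m) ℝ)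
    {r : ℕ} (a : Fin r → Fin n) (b : Fin r → Fin m)
    (hC : IsCyc S a b) (hCe : parity S a b = 1)
    {p : ℕ} (u : Fin (p + 1) → Fin n) (w : Fin (p + 1) → Fin m)
    (hD : IsSRPath S u w)
    (J : Fin r) (hu0 : u 0 = a J) (K : Fin r) (hwp : w (Fin.last p) = b K)
    (hedge : pathEdges u w ∩ cycEdges a b = ∅)
    (hvert : pathVerts u w ∩ cycVerts a b ⊆
      {Sum.inl (u 0), Sum.inr (w (Fin.last p))}) :
    TwoECyclesWithSRIntersection S := by
  obtain ⟨t, s, x₁, y₁, x₂, y₂, hA₁, hA₂, hx₁, hy₁, hx₂, hy₂, hE, hCA⟩ := exists_arcs hC J K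
  rw [← hu0] at hx₁ hx₂
  rw [← hwp] at hy₁ hy₂
  rcases parity_glue_eq_one_or ((isSRPath_iff u w S).1 hD).2.2
    ((isSRPath_iff x₁ y₁ S).1 hA₁).2.2 hx₁ hy₁ hx₂ hy₂ (hCA.trans hCe) with h₁ | h₂
  · exact twoECycles_of_arc hC hCe hD hedge hvert hA₁ hx₁ hy₁ (hE ▸ Set.subset_union_left) h₁
  · exact twoECycles_of_arc hC hCe hD hedge hvert hA₂ hx₂ hy₂ (hE ▸ Set.subset_union_right) h₂
end

section
/- Let S be a real n×m matrix such that every cycle of its SR graph G(S) is an o-cycle; that is, for all r ≥ 2 and all injective a : Fin r → Fin n and b : Fin r → Fin m with S (a j) (b j) ≠ 0 and S (a j) (b (j+1)) ≠ 0 for all j (indices mod r), one has (-1)^r · ∏_j sign(S (a j) (b j)) · sign(S (a j) (b (j+1))) = -1. Then every square submatrix of S (given by injective row and column selections) has signed determinant: it is either sign nonsingular or sign singular. -/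
/-!
Expand `det B = ∑ σ, sign σ * ∏ i, B (σ i) i`. If `σ` and `τ` both pick nonzero entries, every
nontrivial cycle of `τ⁻¹ * σ` traces a cycle of the SR graph whose edges are alternately
entries picked by `σ` and by `τ`, and its being an o-cycle says precisely that `σ` and `τ`
contribute with the same sign along it. Multiplying over the cycles, all nonzero terms of the
expansion have one common sign. As the o-cycle condition and the nonzero pattern only see
signs, the determinant of a matrix in the sign class vanishes either for all members or for
none.
-/

namespace Equiv.Perm

open Function

variable {α : Type*}

def TracesCycle (δ : Perm α) {r : ℕ} (x : Fin r → α) : Prop :=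
  2 ≤ r ∧ Injective x ∧ ∀ j, x (finRotate r j) = δ (x j)

theorem TracesCycle.apply_ne {δ : Perm α} {r : ℕ} {x : Fin r → α} (hx : TracesCycle δ x)
    (j : Fin r) : δ (x j) ≠ x j := by
  obtain ⟨hr, hinj, hrot⟩ := hx
  obtain ⟨r, rfl⟩ := Nat.exists_eq_add_of_le' hr
  rw [← hrot, hinj.ne_iff, ← mem_support, support_finRotate]
  exact Finset.mem_univ j

theorem TracesCycle.mul_of_disjoint {σ τ : Perm α} (hστ : Disjoint σ τ) {r : ℕ}
    {x : Fin r → α} (hx : TracesCycle σ x) : TracesCycle (σ * τ) x := by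
  refine ⟨hx.1, hx.2.1, fun j => ?_⟩
  have hτ : τ (x j) = x j := (hστ (x j)).resolve_left (hx.apply_ne j)
  rw [mul_apply, hτ, hx.2.2]

theorem pow_finRotate_apply (σ : Perm α) (i : α) {r : ℕ} (hr : orderOf σ = r) (j : Fin r) :
    (σ ^ (finRotate r j : ℕ)) i = σ ((σ ^ (j : ℕ)) i) := by
  cases r with
  | zero => exact j.elim0
  | succ r =>
    rw [finRotate_apply, Fin.val_add, ← mul_apply, ← pow_succ', ← pow_mod_orderOf σ (j + 1), hr]
    simp

variable [Fintype α] {R : Type*} [CommRing R] {g : α → α → R}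

theorem prod_mul_apply_of_disjoint (hg : ∀ i, g i i = 1) {σ τ : Perm α} (hστ : Disjoint σ τ) :
    ∏ i, g i ((σ * τ) i) = (∏ i, g i (σ i)) * ∏ i, g i (τ i) := by
  rw [← Finset.prod_mul_distrib]
  refine Finset.prod_congr rfl fun i _ => ?_
  rcases hστ i with hσi | hτi
  · have hστi : σ (τ i) = τ i := by
      rcases hστ (τ i) with h | h
      · exact h
      · rw [(apply_eq_iff_eq τ).1 h, hσi]
    rw [mul_apply, hστi, hσi, hg, one_mul]
  · rw [mul_apply, hτi, hg, mul_one]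

variable [DecidableEq α]

theorem IsCycle.exists_tracesCycle {σ : Perm α} (hσ : σ.IsCycle) :
    ∃ x : Fin σ.support.card → α, TracesCycle σ x ∧ Finset.univ.image x = σ.support := by
  obtain ⟨i, hi, -⟩ := id hσ
  have hinj : Injective fun j : Fin σ.support.card => (σ ^ (j : ℕ)) i := by
    intro a b hab
    have hpow : σ ^ (a : ℕ) = σ ^ (b : ℕ) := hσ.pow_eq_pow_iff.2 ⟨i, hi, hab⟩
    exact Fin.ext (pow_injOn_Iio_orderOf (by simp [hσ.orderOf]) (by simp [hσ.orderOf]) hpow)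
  refine ⟨fun j => (σ ^ (j : ℕ)) i,
    ⟨hσ.two_le_card_support, hinj, pow_finRotate_apply σ i hσ.orderOf⟩, ?_⟩
  refine Finset.eq_of_subset_of_card_le (fun y hy => ?_) ?_
  · obtain ⟨j, -, rfl⟩ := Finset.mem_image.1 hy
    exact pow_apply_mem_support.2 (mem_support.2 hi)
  · rw [Finset.card_image_of_injective _ hinj, Finset.card_univ, Fintype.card_fin]

theorem prod_apply_eq_sign_of_isCycle (hg : ∀ i, g i i = 1) {σ : Perm α} (hσ : σ.IsCycle)
    (hcyc : ∀ (r : ℕ) (x : Fin r → α), TracesCycle σ x →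
      ∏ j, g (x j) (x (finRotate r j)) = -(-1) ^ r) :
    ∏ i, g i (σ i) = (sign σ : ℤ) := by
  obtain ⟨x, hx, himage⟩ := hσ.exists_tracesCycle
  have hsupp : ∏ i ∈ σ.support, g i (σ i) = ∏ i, g i (σ i) :=
    Finset.prod_subset (Finset.subset_univ _) fun i _ hi => by rw [notMem_support.1 hi, hg]
  rw [← hsupp, ← himage, Finset.prod_image fun a _ b _ hab => hx.2.1 hab, hσ.sign]
  simp only [← hx.2.2, hcyc _ x hx]
  push_cast
  rfl

theorem prod_apply_eq_sign (hg : ∀ i, g i i = 1) (δ : Perm α)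
    (hcyc : ∀ (r : ℕ) (x : Fin r → α), TracesCycle δ x →
      ∏ j, g (x j) (x (finRotate r j)) = -(-1) ^ r) :
    ∏ i, g i (δ i) = (sign δ : ℤ) := by
  induction δ using cycle_induction_on with
  | base_one => simp [hg]
  | base_cycles σ hσ => exact prod_apply_eq_sign_of_isCycle hg hσ hcyc
  | induction_disjoint σ τ hστ _ hσ hτ =>
    rw [prod_mul_apply_of_disjoint hg hστ, sign_mul, Units.val_mul, Int.cast_mul,
      hσ fun r x hx => hcyc r x (hx.mul_of_disjoint hστ),
      hτ fun r x hx => hcyc r x (hστ.commute.eq ▸ hx.mul_of_disjoint hστ.symm)]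

end Equiv.Perm

namespace Real

theorem sign_mul_self_eq_abs (x : ℝ) : sign x * x = |x| := by
  rcases lt_trichotomy x 0 with hx | rfl | hx
  · rw [sign_of_neg hx, abs_of_neg hx, neg_one_mul]
  · simp
  · rw [sign_of_pos hx, abs_of_pos hx, one_mul]

theorem sign_mul_sign_self {x : ℝ} (hx : x ≠ 0) : sign x * sign x = 1 := by
  rcases sign_apply_eq_of_ne_zero x hx with h | h <;> simp [h]

end Real

theorem Int.cast_units_mul_self {R : Type*} [Ring R] (u : ℤˣ) : ((u : ℤ) : R) * (u : ℤ) = 1 := by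
  rw [← Int.cast_mul, ← Units.val_mul, Int.units_mul_self, Units.val_one, Int.cast_one]

theorem Matrix.det_eq_zero_of_forall_exists_apply_eq_zero {ι R : Type*} [Fintype ι]
    [DecidableEq ι] [CommRing R] {M : Matrix ι ι R} (hM : ∀ σ : Equiv.Perm ι, ∃ i, M (σ i) i = 0) :
    M.det = 0 := by
  rw [Matrix.det_apply']
  refine Finset.sum_eq_zero fun σ _ => ?_
  obtain ⟨i, hi⟩ := hM σ
  rw [Finset.prod_eq_zero (f := fun i => M (σ i) i) (Finset.mem_univ i) hi, mul_zero]

namespace SRGraph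

open Equiv Finset

variable {n m k : ℕ}

def AllOCycles (S : Matrix (Fin n) (Fin m) ℝ) : Prop :=
  ∀ (r : ℕ) (a : Fin r → Fin n) (b : Fin r → Fin m), IsCyc S a b → parity S a b = -1

theorem AllOCycles.submatrix {S : Matrix (Fin n) (Fin m) ℝ} (hS : AllOCycles S) {l : ℕ}
    {ρ : Fin k → Fin n} {c : Fin l → Fin m} (hρ : Function.Injective ρ)
    (hc : Function.Injective c) : AllOCycles (S.submatrix ρ c) :=
  fun r a b ⟨hr, ha, hb, hdiag, hrot⟩ =>
    hS r (ρ ∘ a) (c ∘ b) ⟨hr, hρ.comp ha, hc.comp hb, hdiag, hrot⟩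

theorem SameSignPattern.apply_eq_zero_iff {l : ℕ} {B M : Matrix (Fin k) (Fin l) ℝ}
    (h : SameSignPattern B M) (i : Fin k) (j : Fin l) : B i j = 0 ↔ M i j = 0 := by
  rw [← Real.sign_eq_zero_iff, h i j, Real.sign_eq_zero_iff]

theorem AllOCycles.of_sameSignPattern {B M : Matrix (Fin n) (Fin m) ℝ} (hM : AllOCycles M)
    (h : SameSignPattern B M) : AllOCycles B := by
  rintro r a b ⟨hr, ha, hb, hdiag, hrot⟩
  have hpar : parity B a b = parity M a b := by simp only [parity, h _ _]
  rw [hpar]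
  exact hM r a b ⟨hr, ha, hb, fun j => (h.apply_eq_zero_iff _ _).not.1 (hdiag j),
    fun j => (h.apply_eq_zero_iff _ _).not.1 (hrot j)⟩

noncomputable def detTermSign (M : Matrix (Fin k) (Fin k) ℝ) (σ : Perm (Fin k)) : ℝ :=
  (Perm.sign σ : ℤ) * ∏ i, Real.sign (M (σ i) i)

theorem detTermSign_mul_term (M : Matrix (Fin k) (Fin k) ℝ) (σ : Perm (Fin k)) :
    detTermSign M σ * ((Perm.sign σ : ℤ) * ∏ i, M (σ i) i) = ∏ i, |M (σ i) i| := by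
  calc detTermSign M σ * ((Perm.sign σ : ℤ) * ∏ i, M (σ i) i)
      = ((Perm.sign σ : ℤ) * (Perm.sign σ : ℤ)) * ∏ i, Real.sign (M (σ i) i) * M (σ i) i := by
        rw [detTermSign, prod_mul_distrib]; ring
    _ = ∏ i, |M (σ i) i| := by simp only [Int.cast_units_mul_self, one_mul, Real.sign_mul_self_eq_abs]

theorem AllOCycles.detTermSign_eq {M : Matrix (Fin k) (Fin k) ℝ} (hM : AllOCycles M)
    {σ τ : Perm (Fin k)} (hσ : ∀ i, M (σ i) i ≠ 0) (hτ : ∀ i, M (τ i) i ≠ 0) :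
    detTermSign M σ = detTermSign M τ := by
  set δ := τ⁻¹ * σ
  have hτδ : ∀ j, τ (δ j) = σ j := fun j => τ.apply_symm_apply (σ j)
  set g : Fin k → Fin k → ℝ := fun j j' => Real.sign (M (σ j) j) * Real.sign (M (σ j) j')
  -- a cycle of `δ` alternates between entries picked by `σ` and by `τ`
  have hcyc : ∀ (r : ℕ) (x : Fin r → Fin k), δ.TracesCycle x →
      ∏ j, g (x j) (x (finRotate r j)) = -(-1) ^ r := by
    rintro r x hx
    have hpar := hM r (σ ∘ x) x ⟨hx.1, σ.injective.comp hx.2.1, hx.2.1, fun j => hσ (x j),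
      fun j => by simpa only [Function.comp, hx.2.2, hτδ] using hτ (δ (x j))⟩
    have hsq : ((-1 : ℝ) ^ r) ^ 2 = 1 := by rw [← pow_mul, mul_comm, pow_mul, neg_one_sq, one_pow]
    change (-1 : ℝ) ^ r * ∏ j, g (x j) (x (finRotate r j)) = -1 at hpar
    linear_combination (-1 : ℝ) ^ r * hpar - (∏ j, g (x j) (x (finRotate r j))) * hsq
  have hδ := Perm.prod_apply_eq_sign (fun i => Real.sign_mul_sign_self (hσ i)) δ hcyc
  have hprod : ∏ i, g i (δ i) =
      (∏ i, Real.sign (M (σ i) i)) * ∏ i, Real.sign (M (τ i) i) := by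
    rw [prod_mul_distrib, ← Equiv.prod_comp δ fun i => Real.sign (M (τ i) i)]
    simp only [hτδ]
  have hsignδ : ((Perm.sign δ : ℤ) : ℝ) = (Perm.sign τ : ℤ) * (Perm.sign σ : ℤ) := by
    simp only [δ, Perm.sign_mul, Perm.sign_inv, Units.val_mul, Int.cast_mul]
  have hτsq : (∏ i, Real.sign (M (τ i) i)) * ∏ i, Real.sign (M (τ i) i) = 1 := by
    rw [← prod_mul_distrib]; exact prod_eq_one fun i _ => Real.sign_mul_sign_self (hτ i)
  rw [hprod, hsignδ] at hδ
  unfold detTermSign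
  linear_combination ((Perm.sign σ : ℤ) * ∏ i, Real.sign (M (τ i) i)) * hδ
    - ((Perm.sign σ : ℤ) * ∏ i, Real.sign (M (σ i) i)) * hτsq
    + ((Perm.sign τ : ℤ) * ∏ i, Real.sign (M (τ i) i)) * Int.cast_units_mul_self (R := ℝ) (Perm.sign σ)

theorem AllOCycles.det_ne_zero {M : Matrix (Fin k) (Fin k) ℝ} (hM : AllOCycles M)
    {σ₀ : Perm (Fin k)} (hσ₀ : ∀ i, M (σ₀ i) i ≠ 0) : M.det ≠ 0 := by
  have hterm : ∀ σ : Perm (Fin k),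
      detTermSign M σ₀ * ((Perm.sign σ : ℤ) * ∏ i, M (σ i) i) = ∏ i, |M (σ i) i| := by
    intro σ
    rcases em (∃ i, M (σ i) i = 0) with ⟨i, hi⟩ | hσ
    · rw [prod_eq_zero (f := fun i => M (σ i) i) (mem_univ i) hi,
        prod_eq_zero (f := fun i => |M (σ i) i|) (mem_univ i) (by rw [hi, abs_zero]),
        mul_zero, mul_zero]
    · rw [hM.detTermSign_eq hσ₀ fun i hi => hσ ⟨i, hi⟩, detTermSign_mul_term]
  have hpos : 0 < detTermSign M σ₀ * M.det := by
    rw [Matrix.det_apply', mul_sum]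
    simp only [hterm]
    exact sum_pos' (fun σ _ => prod_nonneg fun i _ => abs_nonneg _)
      ⟨σ₀, mem_univ _, prod_pos fun i _ => abs_pos.2 (hσ₀ i)⟩
  intro hdet
  rw [hdet, mul_zero] at hpos
  exact hpos.false

end SRGraph

open SRGraph in
/-- If every cycle of the SR graph `G(S)` is an o-cycle (has parity `-1`), then every
square submatrix of `S`, given by injective row and column selections, has signed
determinant: it is sign nonsingular or sign singular. -/
theorem signedDet_of_all_o_cycles {n m : ℕ} (S : Matrix (Fin n) (Fin m) ℝ)
    (h : ∀ (r : ℕ) (a : Fin r → Fin n) (b : Fin r → Fin m),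
      IsCyc S a b → parity S a b = -1) :
    ∀ (k : ℕ) (ρ : Fin k → Fin n) (c : Fin k → Fin m),
      Function.Injective ρ → Function.Injective c →
      SignNonsingular (S.submatrix ρ c) ∨ SignSingular (S.submatrix ρ c) := by
  intro k ρ c hρ hc
  have hM : AllOCycles (S.submatrix ρ c) := AllOCycles.submatrix h hρ hc
  by_cases hdiag : ∀ σ : Equiv.Perm (Fin k), ∃ i, S.submatrix ρ c (σ i) i = 0
  · right
    intro B hB
    exact Matrix.det_eq_zero_of_forall_exists_apply_eq_zero fun σ =>
      (hdiag σ).imp fun i hi => (hB.apply_eq_zero_iff _ _).2 hi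
  · left
    intro B hB
    obtain ⟨σ₀, hσ₀⟩ := not_forall.1 hdiag
    exact (hM.of_sameSignPattern hB).det_ne_zero fun i hi =>
      hσ₀ ⟨i, (hB.apply_eq_zero_iff _ _).1 hi⟩
end

section
/- Let S be a real n×m matrix such that every square submatrix of S (given by injective row and column selections) has signed determinant, i.e., is either sign nonsingular or sign singular. Then every cycle of the SR graph G(S) is an o-cycle: for all r ≥ 2 and all injective a : Fin r → Fin n and b : Fin r → Fin m with S (a j) (b j) ≠ 0 and S (a j) (b (j+1)) ≠ 0 for all j (indices mod r), one has (-1)^r · ∏_j sign(S (a j) (b j)) · sign(S (a j) (b (j+1))) = -1. -/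
section Aux

open SRGraph

private lemma sign_div_abs' {x : ℝ} (hx : x ≠ 0) : Real.sign x = x / |x| := by
  rcases hx.lt_or_gt with h | h
  · rw [Real.sign_of_neg h, abs_of_neg h]
    field_simp
  · rw [Real.sign_of_pos h, abs_of_pos h]
    field_simp

private lemma sign_pos_mul {w : ℝ} (hw : 0 < w) (x : ℝ) :
    Real.sign (w * x) = Real.sign x := by
  rcases lt_trichotomy x 0 with hx | hx | hx
  · rw [Real.sign_of_neg hx, Real.sign_of_neg (mul_neg_of_pos_of_neg hw hx)]
  · simp [hx]
  · rw [Real.sign_of_pos hx, Real.sign_of_pos (mul_pos hw hx)]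

end Aux

open SRGraph in
/-- If every square submatrix of `S` (given by injective row and column selections) has
signed determinant — i.e. is sign nonsingular or sign singular — then every cycle of the
SR graph `G(S)` is an o-cycle (has parity `-1`). -/
theorem all_o_cycles_of_signedDet {n m : ℕ} (S : Matrix (Fin n) (Fin m) ℝ)
    (h : ∀ (k : ℕ) (ρ : Fin k → Fin n) (c : Fin k → Fin m),
      Function.Injective ρ → Function.Injective c →
      SignNonsingular (S.submatrix ρ c) ∨ SignSingular (S.submatrix ρ c)) :
    ∀ (r : ℕ) (a : Fin r → Fin n) (b : Fin r → Fin m),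
      IsCyc S a b → parity S a b = -1 := by
  intro r a b hcyc
  obtain ⟨hr2, ha, hb, hdiag, hrot⟩ := hcyc
  obtain ⟨r', rfl⟩ : ∃ r', r = r' + 1 := ⟨r - 1, by omega⟩
  set σ : Equiv.Perm (Fin (r' + 1)) := finRotate (r' + 1) with hσdef
  set M : Matrix (Fin (r' + 1)) (Fin (r' + 1)) ℝ := S.submatrix a b with hMdef
  have hd' : ∀ j, M j j ≠ 0 := fun j => hdiag j
  have he' : ∀ j, M j (σ j) ≠ 0 := fun j => hrot j
  set P : ℝ := ∏ j, M j j * M j (σ j) with hPdef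
  have hP : P ≠ 0 :=
    Finset.prod_ne_zero_iff.mpr fun j _ => mul_ne_zero (hd' j) (he' j)
  have hQne : (-1 : ℝ) ^ (r' + 1) * P ≠ 0 :=
    mul_ne_zero (pow_ne_zero _ (by norm_num)) hP
  have hparity : parity S a b = ((-1 : ℝ) ^ (r' + 1) * P) / |P| := by
    have hprod : ∏ j, Real.sign (S (a j) (b j)) *
        Real.sign (S (a j) (b (finRotate (r' + 1) j))) = P / |P| := by
      have step : ∀ j : Fin (r' + 1),
          Real.sign (S (a j) (b j)) * Real.sign (S (a j) (b (finRotate (r' + 1) j)))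
            = (M j j * M j (σ j)) / |M j j * M j (σ j)| := by
        intro j
        have h1 : S (a j) (b j) = M j j := rfl
        have h2 : S (a j) (b (finRotate (r' + 1) j)) = M j (σ j) := rfl
        rw [h1, h2, sign_div_abs' (hd' j), sign_div_abs' (he' j), abs_mul,
          div_mul_div_comm]
      rw [Finset.prod_congr rfl fun j _ => step j, Finset.prod_div_distrib,
        Finset.abs_prod, hPdef]
    rw [parity, hprod, mul_div_assoc]
  suffices hQ : (-1 : ℝ) ^ (r' + 1) * P < 0 by
    rw [hparity]
    have habs : |P| = -((-1 : ℝ) ^ (r' + 1) * P) := by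
      have : |(-1 : ℝ) ^ (r' + 1) * P| = |P| := by
        rw [abs_mul, abs_pow, abs_neg, abs_one, one_pow, one_mul]
      rw [← this, abs_of_neg hQ]
    rw [habs, div_neg, div_self hQne]
  by_contra hQ0
  have hQpos : 0 < (-1 : ℝ) ^ (r' + 1) * P := lt_of_le_of_ne (not_lt.mp hQ0) (Ne.symm hQne)
  -- two one-parameter families with the sign pattern of M (for positive parameter)
  set BD : ℝ → Matrix (Fin (r' + 1)) (Fin (r' + 1)) ℝ :=
    fun ε => Matrix.of fun i j => (if i = j then 1 else ε) * M i j with hBDdef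
  set BR : ℝ → Matrix (Fin (r' + 1)) (Fin (r' + 1)) ℝ :=
    fun ε => Matrix.of fun i j => (if j = σ i then 1 else ε) * M i j with hBRdef
  have hBD0 : (BD 0).det = ∏ j, M j j := by
    have hEq : BD 0 = Matrix.diagonal fun i => M i i := by
      ext i j
      by_cases hij : i = j
      · subst hij; simp [hBDdef, Matrix.diagonal_apply]
      · simp [hBDdef, Matrix.diagonal_apply, hij]
    rw [hEq, Matrix.det_diagonal]
  have hBR0 : (BR 0).det = (-1 : ℝ) ^ r' * ∏ j, M j (σ j) := by
    have hEq : BR 0 = (Matrix.diagonal fun k => M (σ⁻¹ k) k).submatrix σ id := by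
      ext i j
      by_cases hij : j = σ i
      · subst hij
        simp [hBRdef, Matrix.diagonal_apply]
      · have : σ i ≠ j := fun hc => hij hc.symm
        simp [hBRdef, Matrix.diagonal_apply, hij, this]
    have hsign : ((Equiv.Perm.sign σ : ℤ) : ℝ) = (-1 : ℝ) ^ r' := by
      rw [hσdef, sign_finRotate]
      push_cast
      ring
    have hreidx : ∏ k, M (σ⁻¹ k) k = ∏ j, M j (σ j) := by
      rw [← Equiv.prod_comp σ (fun k => M (σ⁻¹ k) k)]
      simp
    rw [hEq, Matrix.det_permute, Matrix.det_diagonal, hreidx]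
    push_cast [hsign]
    ring_nf
  have hcD : Continuous fun ε : ℝ => (BD ε).det := by
    refine Continuous.matrix_det (continuous_matrix fun i j => ?_)
    simp only [hBDdef, Matrix.of_apply]
    by_cases hij : i = j <;> simp [hij] <;> fun_prop
  have hcR : Continuous fun ε : ℝ => (BR ε).det := by
    refine Continuous.matrix_det (continuous_matrix fun i j => ?_)
    simp only [hBRdef, Matrix.of_apply]
    by_cases hij : j = σ i <;> simp [hij] <;> fun_prop
  have hG : Continuous fun ε : ℝ => (BD ε).det * (BR ε).det := hcD.mul hcR
  have hG0 : (BD 0).det * (BR 0).det < 0 := by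
    rw [hBD0, hBR0]
    have hPsplit : P = (∏ j, M j j) * ∏ j, M j (σ j) := by
      rw [hPdef, Finset.prod_mul_distrib]
    have hEq : (∏ j, M j j) * ((-1 : ℝ) ^ r' * ∏ j, M j (σ j))
        = -((-1 : ℝ) ^ (r' + 1) * P) := by
      rw [hPsplit, pow_succ]
      ring
    rw [hEq]
    linarith
  have hUmem : {ε : ℝ | (BD ε).det * (BR ε).det < 0} ∈ nhdsWithin (0 : ℝ) (Set.Ioi 0) :=
    nhdsWithin_le_nhds ((isOpen_lt hG continuous_const).mem_nhds hG0)
  obtain ⟨ε, hεlt, hεpos⟩ :=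
    Filter.nonempty_of_mem (Filter.inter_mem hUmem self_mem_nhdsWithin)
  have hεpos : (0 : ℝ) < ε := hεpos
  have hεlt : (BD ε).det * (BR ε).det < 0 := hεlt
  have hpatD : SameSignPattern (BD ε) M := by
    intro i j
    simp only [hBDdef, Matrix.of_apply]
    refine sign_pos_mul ?_ _
    by_cases hij : i = j <;> simp [hij, hεpos]
  rcases h (r' + 1) a b ha hb with hns | hss
  · -- sign nonsingular: intermediate value theorem gives a contradiction
    set A : ℝ → Matrix (Fin (r' + 1)) (Fin (r' + 1)) ℝ := fun l =>
      Matrix.of fun i j =>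
        ((1 - l) * (if i = j then 1 else ε) + l * (if j = σ i then 1 else ε)) * M i j
      with hAdef
    have hA0 : A 0 = BD ε := by
      ext i j
      simp [hAdef, hBDdef]
    have hA1 : A 1 = BR ε := by
      ext i j
      simp [hAdef, hBRdef]
    have hgc : Continuous fun l : ℝ => (A l).det := by
      refine Continuous.matrix_det (continuous_matrix fun i j => ?_)
      simp only [hAdef, Matrix.of_apply]
      fun_prop
    have hIVT : ∃ l ∈ Set.Icc (0 : ℝ) 1, (A l).det = 0 := by
      have hεlt' : (A 0).det * (A 1).det < 0 := by rw [hA0, hA1]; exact hεlt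
      rcases mul_neg_iff.mp hεlt' with
        ⟨hpos, hneg⟩ | ⟨hneg, hpos⟩
      · have := intermediate_value_Icc' (by norm_num : (0 : ℝ) ≤ 1)
          (hgc.comp continuous_id).continuousOn (a := 0) (b := 1)
        have h0mem : (0 : ℝ) ∈ Set.Icc ((A 1).det) ((A 0).det) := ⟨hneg.le, hpos.le⟩
        obtain ⟨l, hl, hl0⟩ := this h0mem
        exact ⟨l, hl, hl0⟩
      · have := intermediate_value_Icc (by norm_num : (0 : ℝ) ≤ 1)
          (hgc.comp continuous_id).continuousOn (a := 0) (b := 1)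
        have h0mem : (0 : ℝ) ∈ Set.Icc ((A 0).det) ((A 1).det) := ⟨hneg.le, hpos.le⟩
        obtain ⟨l, hl, hl0⟩ := this h0mem
        exact ⟨l, hl, hl0⟩
    obtain ⟨l, ⟨hl0, hl1⟩, hldet⟩ := hIVT
    have hpatA : SameSignPattern (A l) M := by
      intro i j
      simp only [hAdef, Matrix.of_apply]
      refine sign_pos_mul ?_ _
      have h1 : (0 : ℝ) < if i = j then 1 else ε := by
        by_cases hij : i = j <;> simp [hij, hεpos]
      have h2 : (0 : ℝ) < if j = σ i then 1 else ε := by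
        by_cases hij : j = σ i <;> simp [hij, hεpos]
      rcases hl0.lt_or_eq with h0 | h0
      · exact add_pos_of_nonneg_of_pos (mul_nonneg (by linarith) h1.le) (mul_pos h0 h2)
      · rw [← h0]
        simpa using h1
    exact hns (A l) hpatA hldet
  · -- sign singular: the perturbed matrix BD ε has nonzero determinant
    have hzero : (BD ε).det = 0 := hss (BD ε) hpatD
    rw [hzero, zero_mul] at hεlt
    exact lt_irrefl _ hεlt
end
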